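/- arXiv:1903.00995 — 5 statements merged into one kernel-verified Lean document; each statement's English description precedes it below -/
import Mathlib

section
/- Let n be a power of 2 and let Q = {0} ∪ {2^j : 0 ≤ j ≤ log₂ n − 1} ⊆ [n]. Then there exists a decoding function D : (Q → ℂ) → [n] such that for every x ∈ ℂ^n and every f ∈ [n], if x̂_f ≠ 0 and |x̂_f| ≥ 3·Σ_{f'≠f}|x̂_{f'}|, then D applied to the restriction of x to the coordinates in Q returns f. In other words, the frequency f of any signal whose Fourier transform is dominated at f (in the above ℓ1 sense) is uniquely determined by, and recoverable from, the 1 + log₂ n time-domain samples x_q, q ∈ Q. -/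
open Finset

/-- Discrete Fourier transform: `x̂_f = n^{-1/2} ∑_j x_j e^{2πi jf/n}`. -/
noncomputable def dft (n : ℕ) (x : Fin n → ℂ) : Fin n → ℂ := fun f =>
  (1 / (Real.sqrt n) : ℂ) *
    ∑ j : Fin n, x j * Complex.exp (2 * (Real.pi : ℂ) * Complex.I *
      (((j : ℕ) * (f : ℕ) : ℕ) : ℂ) / (n : ℂ))

namespace OneSparseAux

lemma exp_two_pi_int (k : ℤ) : Complex.exp (2 * (Real.pi : ℂ) * Complex.I * k) = 1 := by
  rw [show 2 * (Real.pi : ℂ) * Complex.I * k = (k : ℂ) * (2 * Real.pi * Complex.I) by ring]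
  exact Complex.exp_int_mul_two_pi_mul_I k

lemma geom_zero (n : ℕ) (d : ℤ) (hd : ¬ ((n : ℤ) ∣ d)) :
    ∑ f ∈ Finset.range n, Complex.exp (2 * (Real.pi : ℂ) * Complex.I * d / n) ^ f = 0 := by
  rcases Nat.eq_zero_or_pos n with h | h
  · subst h; simp
  have hn0 : (n : ℂ) ≠ 0 := Nat.cast_ne_zero.mpr h.ne'
  set z := Complex.exp (2 * (Real.pi : ℂ) * Complex.I * d / n) with hz
  have hπ : (2 * (Real.pi : ℂ) * Complex.I) ≠ 0 := by
    simp [Real.pi_ne_zero, Complex.I_ne_zero]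
  have hz1 : z ≠ 1 := by
    intro hzz
    rw [hz, Complex.exp_eq_one_iff] at hzz
    obtain ⟨t, ht⟩ := hzz
    apply hd
    refine ⟨t, ?_⟩
    have hc : (d : ℂ) = (n : ℂ) * t := by
      field_simp at ht
      have ht' : 2 * (Real.pi : ℂ) * Complex.I * d =
          2 * (Real.pi : ℂ) * Complex.I * ((n : ℂ) * t) := by linear_combination (2 * (Real.pi : ℂ) * Complex.I) * ht
      exact mul_left_cancel₀ hπ ht'
    exact_mod_cast hc
  have hzn : z ^ n = 1 := by
    rw [hz, ← Complex.exp_nat_mul,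
      show (n : ℂ) * (2 * (Real.pi : ℂ) * Complex.I * d / n) = 2 * (Real.pi : ℂ) * Complex.I * d by
        field_simp]
    exact exp_two_pi_int d
  rw [geom_sum_eq hz1, hzn, sub_self, zero_div]

end OneSparseAux

namespace OneSparseAux

lemma exp_key (n j q f : ℕ) :
    Complex.exp (2 * (Real.pi : ℂ) * Complex.I * ((j * f : ℕ) : ℂ) / n) *
      Complex.exp (-(2 * (Real.pi : ℂ) * Complex.I) * ((q * f : ℕ) : ℂ) / n) =
    Complex.exp (2 * (Real.pi : ℂ) * Complex.I * ((j : ℂ) - (q : ℂ)) / n) ^ f := by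
  rw [← Complex.exp_nat_mul, ← Complex.exp_add]
  congr 1
  push_cast
  ring

lemma inner_sum (n : ℕ) (j q : Fin n) :
    ∑ f : Fin n,
      Complex.exp (2 * (Real.pi : ℂ) * Complex.I * (((j:ℕ) : ℂ) - ((q:ℕ) : ℂ)) / n) ^ (f : ℕ)
      = if j = q then (n : ℂ) else 0 := by
  by_cases hjq : j = q
  · subst hjq
    simp
  · rw [if_neg hjq]
    rw [Fin.sum_univ_eq_sum_range
      (fun f => Complex.exp (2 * (Real.pi : ℂ) * Complex.I *
        (((j:ℕ) : ℂ) - ((q:ℕ) : ℂ)) / n) ^ f) n]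
    have hgz := geom_zero n (((j:ℕ) : ℤ) - ((q:ℕ) : ℤ))
    push_cast at hgz
    apply hgz
    intro hd
    have hj := j.isLt
    have hq := q.isLt
    have hne : (j : ℕ) ≠ (q : ℕ) := fun h => hjq (Fin.ext h)
    have := Int.eq_zero_of_abs_lt_dvd hd (abs_lt.mpr ⟨by omega, by omega⟩)
    omega

lemma dft_sum (n : ℕ) (hn : 0 < n) (x : Fin n → ℂ) (q : Fin n) :
    ∑ f : Fin n, dft n x f *
        Complex.exp (-(2 * (Real.pi : ℂ) * Complex.I) * (((q : ℕ) * (f : ℕ) : ℕ) : ℂ) / n)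
      = (Real.sqrt n : ℂ) * x q := by
  have hs0 : ((Real.sqrt n : ℝ) : ℂ) ≠ 0 := by
    simp only [ne_eq, Complex.ofReal_eq_zero]
    positivity
  have hss : ((Real.sqrt n : ℝ) : ℂ) * ((Real.sqrt n : ℝ) : ℂ) = (n : ℂ) := by
    norm_cast
    exact Real.mul_self_sqrt (Nat.cast_nonneg n)
  simp only [dft]
  have h1 : ∀ f : Fin n,
      ((1 / (Real.sqrt n : ℝ) : ℂ) * ∑ j : Fin n, x j *
          Complex.exp (2 * (Real.pi : ℂ) * Complex.I * (((j:ℕ) * (f:ℕ) : ℕ) : ℂ) / n)) *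
        Complex.exp (-(2 * (Real.pi : ℂ) * Complex.I) * (((q:ℕ) * (f:ℕ) : ℕ) : ℂ) / n)
      = ∑ j : Fin n, (1 / (Real.sqrt n : ℝ) : ℂ) * (x j *
          (Complex.exp (2 * (Real.pi : ℂ) * Complex.I * (((j:ℕ) * (f:ℕ) : ℕ) : ℂ) / n) *
            Complex.exp (-(2 * (Real.pi : ℂ) * Complex.I) * (((q:ℕ) * (f:ℕ) : ℕ) : ℂ) / n))) := by
    intro f
    rw [Finset.mul_sum, Finset.sum_mul]
    exact Finset.sum_congr rfl fun j _ => by ring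
  rw [Finset.sum_congr rfl fun f _ => h1 f, Finset.sum_comm]
  have h2 : ∀ j : Fin n,
      (∑ f : Fin n, (1 / (Real.sqrt n : ℝ) : ℂ) * (x j *
          (Complex.exp (2 * (Real.pi : ℂ) * Complex.I * (((j:ℕ) * (f:ℕ) : ℕ) : ℂ) / n) *
            Complex.exp (-(2 * (Real.pi : ℂ) * Complex.I) * (((q:ℕ) * (f:ℕ) : ℕ) : ℂ) / n))))
      = if j = q then (1 / (Real.sqrt n : ℝ) : ℂ) * (x j * n) else 0 := by
    intro j
    rw [← Finset.mul_sum, ← Finset.mul_sum]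
    have h3 : (∑ f : Fin n,
        Complex.exp (2 * (Real.pi : ℂ) * Complex.I * (((j:ℕ) * (f:ℕ) : ℕ) : ℂ) / n) *
          Complex.exp (-(2 * (Real.pi : ℂ) * Complex.I) * (((q:ℕ) * (f:ℕ) : ℕ) : ℂ) / n))
        = if j = q then (n : ℂ) else 0 := by
      simp only [exp_key]
      exact inner_sum n j q
    rw [h3]
    by_cases h : j = q <;> simp [h]
  rw [Finset.sum_congr rfl fun j _ => h2 j, Finset.sum_ite_eq' Finset.univ q]
  simp only [Finset.mem_univ, if_true]
  rw [← hss]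
  field_simp

end OneSparseAux

namespace OneSparseAux

lemma sample_decomp (n : ℕ) (hn : 0 < n) (x : Fin n → ℂ) (f q : Fin n) :
    x q = (1 / (Real.sqrt n) : ℂ) *
      (dft n x f *
          Complex.exp (-(2 * (Real.pi : ℂ) * Complex.I) * (((q : ℕ) * (f : ℕ) : ℕ) : ℂ) / n) +
        ∑ f' ∈ Finset.univ.erase f, dft n x f' *
          Complex.exp (-(2 * (Real.pi : ℂ) * Complex.I) * (((q : ℕ) * (f' : ℕ) : ℕ) : ℂ) / n)) := by
  have hs0 : ((Real.sqrt n : ℝ) : ℂ) ≠ 0 := by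
    simp only [ne_eq, Complex.ofReal_eq_zero]
    positivity
  have h := dft_sum n hn x q
  rw [← Finset.add_sum_erase Finset.univ _ (Finset.mem_univ f)] at h
  rw [h]
  field_simp

lemma err_bound (n : ℕ) (x : Fin n → ℂ) (f q : Fin n) :
    ‖∑ f' ∈ Finset.univ.erase f, dft n x f' *
        Complex.exp (-(2 * (Real.pi : ℂ) * Complex.I) * (((q : ℕ) * (f' : ℕ) : ℕ) : ℂ) / n)‖
      ≤ ∑ f' ∈ Finset.univ.erase f, ‖dft n x f'‖ := by
  refine le_trans (norm_sum_le _ _) (Finset.sum_le_sum fun f' _ => ?_)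
  rw [norm_mul]
  have h1 : ‖Complex.exp
      (-(2 * (Real.pi : ℂ) * Complex.I) * (((q : ℕ) * (f' : ℕ) : ℕ) : ℂ) / n)‖ = 1 := by
    rw [show -(2 * (Real.pi : ℂ) * Complex.I) * (((q : ℕ) * (f' : ℕ) : ℕ) : ℂ) / (n : ℂ)
        = ((-(2 * Real.pi * ((q : ℕ) * (f' : ℕ) : ℕ) / n) : ℝ) : ℂ) * Complex.I by
      push_cast; ring]
    exact Complex.norm_exp_ofReal_mul_I _
  rw [h1, mul_one]

end OneSparseAux

namespace OneSparseAux

lemma step (m n : ℕ) (hn : n = 2 ^ m) (x : Fin n → ℂ) (f : Fin n)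
    (hf : dft n x f ≠ 0)
    (hdom : 3 * ∑ f' ∈ Finset.univ.erase f, ‖dft n x f'‖
        ≤ ‖dft n x f‖)
    (k : ℕ) (hk : k < m) (hq : 2 ^ (m - 1 - k) < n) (h0 : 0 < n) :
    (0 < (x ⟨2 ^ (m - 1 - k), hq⟩ * (starRingEnd ℂ) (x ⟨0, h0⟩) *
        Complex.exp ((Real.pi : ℂ) * Complex.I * (((f : ℕ) % 2 ^ k : ℕ) : ℂ) / (2 ^ k : ℂ))).re
      ↔ (f : ℕ) / 2 ^ k % 2 = 0) := by
  set u := dft n x f with hu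
  set S := ∑ f' ∈ Finset.univ.erase f, ‖dft n x f'‖ with hSdef
  set A := ‖u‖ with hA
  have hApos : 0 < A := by
    rw [hA]; exact (norm_pos_iff.mpr hf)
  have hS0 : 0 ≤ S := Finset.sum_nonneg fun _ _ => norm_nonneg _
  set a := (f : ℕ) % 2 ^ k with ha
  set b := (f : ℕ) / 2 ^ k % 2 with hbdef
  have hb : b = 0 ∨ b = 1 := Nat.mod_two_eq_zero_or_one _
  set q : Fin n := ⟨2 ^ (m - 1 - k), hq⟩ with hqdef
  set q0 : Fin n := ⟨0, h0⟩ with hq0def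
  set e : ℂ := Complex.exp ((Real.pi : ℂ) * Complex.I * ((a : ℕ) : ℂ) / (2 ^ k : ℂ)) with he
  have habse : ‖e‖ = 1 := by
    rw [he, show (Real.pi : ℂ) * Complex.I * ((a : ℕ) : ℂ) / (2 ^ k : ℂ)
        = ((Real.pi * a / 2 ^ k : ℝ) : ℂ) * Complex.I by push_cast; ring]
    exact Complex.norm_exp_ofReal_mul_I _
  set Eq' : ℂ := ∑ f' ∈ Finset.univ.erase f, dft n x f' *
      Complex.exp (-(2 * (Real.pi : ℂ) * Complex.I) * (((q : ℕ) * (f' : ℕ) : ℕ) : ℂ) / n)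
    with hEq'
  set E0 : ℂ := ∑ f' ∈ Finset.univ.erase f, dft n x f' *
      Complex.exp (-(2 * (Real.pi : ℂ) * Complex.I) * (((q0 : ℕ) * (f' : ℕ) : ℕ) : ℂ) / n)
    with hE0
  have hEqS : ‖Eq'‖ ≤ S := err_bound n x f q
  have hE0S : ‖E0‖ ≤ S := err_bound n x f q0
  have hxq : x q = (1 / (Real.sqrt n) : ℂ) * (u *
      Complex.exp (-(2 * (Real.pi : ℂ) * Complex.I) * (((q : ℕ) * (f : ℕ) : ℕ) : ℂ) / n) + Eq') :=
    sample_decomp n h0 x f q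
  have hx0 : x q0 = (1 / (Real.sqrt n) : ℂ) * (u + E0) := by
    have h := sample_decomp n h0 x f q0
    have hzz : ((q0 : ℕ) * (f : ℕ) : ℕ) = 0 := by simp [hq0def]
    rw [hzz, Nat.cast_zero,
      show -(2 * (Real.pi : ℂ) * Complex.I) * 0 / (n : ℂ) = 0 by ring,
      Complex.exp_zero, mul_one] at h
    exact h
  -- the key exponential identity
  have hε : Complex.exp (-(2 * (Real.pi : ℂ) * Complex.I) *
        (((q : ℕ) * (f : ℕ) : ℕ) : ℂ) / n) * e = (-1 : ℂ) ^ b := by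
    obtain ⟨M, hM1, hM2⟩ : ∃ M, m - 1 - k = M ∧ m = (k + 1) + M := ⟨m - 1 - k, rfl, by omega⟩
    set t := (f : ℕ) / 2 ^ (k + 1) with ht
    have hfd : (f : ℕ) = 2 ^ (k + 1) * t + (a + 2 ^ k * b) := by
      have h1 := Nat.div_add_mod (f : ℕ) (2 ^ k)
      have h2 := Nat.div_add_mod ((f : ℕ) / 2 ^ k) 2
      have h3 : (f : ℕ) / 2 ^ k / 2 = t := by
        rw [Nat.div_div_eq_div_mul, ht, pow_succ]
      have h4 : (f : ℕ) / 2 ^ k = 2 * t + b := by omega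
      calc (f : ℕ) = 2 ^ k * ((f : ℕ) / 2 ^ k) + a := h1.symm
        _ = 2 ^ k * (2 * t + b) + a := by rw [h4]
        _ = 2 ^ (k + 1) * t + (a + 2 ^ k * b) := by ring
    rw [he, ← Complex.exp_add]
    have harg : -(2 * (Real.pi : ℂ) * Complex.I) * (((q : ℕ) * (f : ℕ) : ℕ) : ℂ) / n +
          (Real.pi : ℂ) * Complex.I * ((a : ℕ) : ℂ) / (2 ^ k : ℂ)
        = -((t : ℂ)) * (2 * (Real.pi : ℂ) * Complex.I) +
          -(((b : ℕ) : ℂ) * ((Real.pi : ℂ) * Complex.I)) := by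
      have hqv : (q : ℕ) = 2 ^ M := by rw [← hM1]
      have hnc : (n : ℂ) = (2 : ℂ) ^ k * 2 * (2 : ℂ) ^ M := by
        rw [hn, hM2]
        push_cast [pow_add, pow_succ]
        ring
      have h2k : ((2 : ℂ)) ^ k ≠ 0 := pow_ne_zero _ two_ne_zero
      have h2M : ((2 : ℂ)) ^ M ≠ 0 := pow_ne_zero _ two_ne_zero
      rw [hnc]
      push_cast [hqv, hfd, pow_succ]
      field_simp
      ring
    have h1t : Complex.exp (-((t : ℂ)) * (2 * (Real.pi : ℂ) * Complex.I)) = 1 := by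
      have h := Complex.exp_int_mul_two_pi_mul_I (-(t : ℤ))
      push_cast at h
      exact h
    rw [harg, Complex.exp_add, h1t, one_mul]
    rcases hb with hb | hb <;> rw [hb]
    · norm_num
    · norm_num [Complex.exp_neg, Complex.exp_pi_mul_I]
  -- express the test quantity
  set c : ℝ := 1 / Real.sqrt n with hc
  have hcpos : 0 < c := by
    rw [hc]
    have : 0 < Real.sqrt n := Real.sqrt_pos.mpr (by exact_mod_cast h0)
    positivity
  set V : ℂ := (u + (-1 : ℂ) ^ b * (Eq' * e)) * (starRingEnd ℂ) (u + E0) with hV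
  have hcc : (1 / ((Real.sqrt n : ℝ) : ℂ)) = ((c : ℝ) : ℂ) := by
    rw [hc]; push_cast; ring
  have hT : x q * (starRingEnd ℂ) (x q0) * e
      = ((c * c : ℝ) : ℂ) * ((-1 : ℂ) ^ b * V) := by
    rw [hxq, hx0, hcc, map_mul, Complex.conj_ofReal, hV]
    have hb2 : ((-1 : ℂ) ^ b) * ((-1 : ℂ) ^ b) = 1 := by
      rcases hb with hb | hb <;> rw [hb] <;> norm_num
    rw [Complex.ofReal_mul]
    linear_combination ((c:ℂ) * (c:ℂ) * ((starRingEnd ℂ) (u + E0)) * u) * hε -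
      ((c:ℂ) * (c:ℂ) * ((starRingEnd ℂ) (u + E0)) * Eq' * e) * hb2
  -- positivity of V.re
  have hVre : 0 < V.re := by
    have hsplit : V = u * (starRingEnd ℂ) u +
        (u * (starRingEnd ℂ) E0 + ((-1 : ℂ) ^ b * (Eq' * e)) * (starRingEnd ℂ) u +
          ((-1 : ℂ) ^ b * (Eq' * e)) * (starRingEnd ℂ) E0) := by
      rw [hV, map_add]; ring
    have h1 : (u * (starRingEnd ℂ) u).re = A ^ 2 := by
      rw [Complex.mul_conj, hA, Complex.sq_norm]; simp
    have habs1 : ‖(-1 : ℂ) ^ b * (Eq' * e)‖ ≤ S := by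
      rw [norm_mul, norm_mul, habse, mul_one]
      have hmone : ‖(-1 : ℂ) ^ b‖ = 1 := by simp
      rw [hmone, one_mul]
      exact hEqS
    have hrest : -(A * S + S * A + S * S) ≤ (u * (starRingEnd ℂ) E0 +
        ((-1 : ℂ) ^ b * (Eq' * e)) * (starRingEnd ℂ) u +
        ((-1 : ℂ) ^ b * (Eq' * e)) * (starRingEnd ℂ) E0).re := by
      have habs : ‖u * (starRingEnd ℂ) E0 +
          ((-1 : ℂ) ^ b * (Eq' * e)) * (starRingEnd ℂ) u +
          ((-1 : ℂ) ^ b * (Eq' * e)) * (starRingEnd ℂ) E0‖ ≤ A * S + S * A + S * S := by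
        refine le_trans (norm_add_le _ _) ?_
        have i1 := norm_add_le (u * (starRingEnd ℂ) E0)
          (((-1 : ℂ) ^ b * (Eq' * e)) * (starRingEnd ℂ) u)
        have e1 : ‖u * (starRingEnd ℂ) E0‖ ≤ A * S := by
          rw [norm_mul, Complex.norm_conj]
          exact mul_le_mul_of_nonneg_left hE0S (norm_nonneg _)
        have e2 : ‖((-1 : ℂ) ^ b * (Eq' * e)) * (starRingEnd ℂ) u‖ ≤ S * A := by
          rw [norm_mul, Complex.norm_conj, ← hA]
          exact mul_le_mul_of_nonneg_right habs1 (norm_nonneg _)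
        have e3 : ‖((-1 : ℂ) ^ b * (Eq' * e)) * (starRingEnd ℂ) E0‖ ≤ S * S := by
          rw [norm_mul, Complex.norm_conj]
          exact mul_le_mul habs1 hE0S (norm_nonneg _) hS0
        nlinarith [i1]
      have := Complex.abs_re_le_norm (u * (starRingEnd ℂ) E0 +
          ((-1 : ℂ) ^ b * (Eq' * e)) * (starRingEnd ℂ) u +
          ((-1 : ℂ) ^ b * (Eq' * e)) * (starRingEnd ℂ) E0)
      have h' := abs_le.mp (le_trans this habs)
      exact h'.1
    have hVre' : V.re = A ^ 2 + (u * (starRingEnd ℂ) E0 +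
        ((-1 : ℂ) ^ b * (Eq' * e)) * (starRingEnd ℂ) u +
        ((-1 : ℂ) ^ b * (Eq' * e)) * (starRingEnd ℂ) E0).re := by
      rw [hsplit, Complex.add_re, h1]
    rw [hVre']
    nlinarith [hrest, hdom, hApos, hS0]
  -- conclude
  rw [hT, Complex.re_ofReal_mul]
  rcases hb with hb | hb
  · rw [hb]
    simp only [pow_zero, one_mul]
    constructor
    · intro _; trivial
    · intro _
      exact mul_pos (mul_pos hcpos hcpos) hVre
  · rw [hb, pow_one, show ((-1 : ℂ) * V) = -V from by ring, Complex.neg_re]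
    constructor
    · intro h
      exfalso
      nlinarith [mul_pos (mul_pos hcpos hcpos) hVre]
    · intro h
      first
      | exact h.elim
      | simp at h

end OneSparseAux

namespace OneSparseAux

noncomputable def recBits (m : ℕ) (s0 : ℂ) (sj : ℕ → ℂ) : ℕ → ℕ
  | 0 => 0
  | k + 1 =>
      recBits m s0 sj k +
        if 0 < (sj (m - 1 - k) * (starRingEnd ℂ) s0 *
            Complex.exp ((Real.pi : ℂ) * Complex.I * ((recBits m s0 sj k : ℕ) : ℂ) /
              (2 ^ k : ℂ))).re
        then 0 else 2 ^ k

lemma recBits_correct (m n : ℕ) (hn : n = 2 ^ m) (h0 : 0 < n) (x : Fin n → ℂ) (f : Fin n)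
    (hf : dft n x f ≠ 0)
    (hdom : 3 * ∑ f' ∈ Finset.univ.erase f, ‖dft n x f'‖
        ≤ ‖dft n x f‖)
    (s0 : ℂ) (sj : ℕ → ℂ)
    (hs0 : s0 = x ⟨0, h0⟩)
    (hsj : ∀ j, ∀ hj : j < m, sj j =
      x ⟨2 ^ j, by rw [hn]; exact Nat.pow_lt_pow_right one_lt_two hj⟩) :
    ∀ k, k ≤ m → recBits m s0 sj k = (f : ℕ) % 2 ^ k := by
  intro k
  induction k with
  | zero => intro _; simp [recBits, Nat.mod_one]
  | succ k ih =>
    intro hk1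
    have hk : k < m := by omega
    have hq : 2 ^ (m - 1 - k) < n := by
      rw [hn]; exact Nat.pow_lt_pow_right one_lt_two (by omega)
    have ha := ih (by omega)
    have hstep := step m n hn x f hf hdom k hk hq h0
    rw [recBits, ha, hsj (m - 1 - k) (by omega), hs0, Nat.mod_pow_succ]
    split_ifs with hcond
    · have hb0 : (f : ℕ) / 2 ^ k % 2 = 0 := hstep.mp hcond
      rw [hb0]
      ring
    · have hb1 : (f : ℕ) / 2 ^ k % 2 = 1 := by
        rcases Nat.mod_two_eq_zero_or_one ((f : ℕ) / 2 ^ k) with h | h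
        · exact absurd (hstep.mpr h) hcond
        · exact h
      rw [hb1]
      ring
end OneSparseAux

/-- Deterministic 1-sparse recovery: with `n = 2^m` and `Q = {0} ∪ {2^j : j < m}`, there is a
decoder `D` reading only the samples `x_q`, `q ∈ Q`, which outputs the frequency `f` whenever
`x̂_f ≠ 0` and `|x̂_f| ≥ 3 ∑_{f' ≠ f} |x̂_{f'}|`. -/
theorem one_sparse_recovery (m n : ℕ) (hn : n = 2 ^ m) :
    ∃ D : ({q : Fin n // (q : ℕ) = 0 ∨ ∃ j < m, (q : ℕ) = 2 ^ j} → ℂ) → Fin n,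
      ∀ x : Fin n → ℂ, ∀ f : Fin n,
        dft n x f ≠ 0 →
        3 * ∑ f' ∈ Finset.univ.erase f, ‖dft n x f'‖ ≤
          ‖dft n x f‖ →
        D (fun q => x q.1) = f := by
  have h0 : 0 < n := by rw [hn]; positivity
  refine ⟨fun s => ⟨OneSparseAux.recBits m (s ⟨⟨0, h0⟩, Or.inl rfl⟩)
      (fun j => if h : j < m then
        s ⟨⟨2 ^ j, by rw [hn]; exact Nat.pow_lt_pow_right one_lt_two h⟩, Or.inr ⟨j, h, rfl⟩⟩
      else 0) m % n, Nat.mod_lt _ h0⟩, ?_⟩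
  intro x f hf hdom
  apply Fin.ext
  have hcor := OneSparseAux.recBits_correct m n hn h0 x f hf hdom
    (x ⟨0, h0⟩)
    (fun j => if h : j < m then
      x ⟨2 ^ j, by rw [hn]; exact Nat.pow_lt_pow_right one_lt_two h⟩ else 0)
    rfl (fun j hj => by simp [hj]) m le_rfl
  show OneSparseAux.recBits m _ _ m % n = (f : ℕ)
  rw [hcor]
  have h1 : (f : ℕ) % 2 ^ m = (f : ℕ) := Nat.mod_eq_of_lt (by rw [← hn]; exact f.isLt)
  rw [h1]
  exact Nat.mod_eq_of_lt f.isLt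
end

section
/- Let n and B be powers of two with B < n, let ε ∈ (0, 1), and let Ĝ : Z_n → [0, 1] satisfy Ĝ_ℓ ≤ ε whenever the representative of ℓ in (−n/2, n/2] lies outside (−n/B, n/B). Fix f ≠ f' in Z_n and λ ≥ 0. With σ uniformly distributed over the odd residues modulo n, b uniformly distributed over Z_n, and σ, b independent, E[exp(λ·Ĝ_{o_{f,σ,b}(f')})] ≤ e^{λε}·[(2/B + 1/n)·(e^{λ(1−ε)} − 1) + 1]. -/
open Finset

/-- The (integer) rounded bucket index `round((B/n)·π_{σ,b}(f))`, where
`π_{σ,b}(f) = σ(f-b) mod n`. -/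
noncomputable def hround (n B : ℕ) (σ b f : ZMod n) : ℤ :=
  round ((B : ℝ) / (n : ℝ) * (((σ * (f - b)).val : ℕ) : ℝ))

/-- The offset `o_{f,σ,b}(f') = π_{σ,b}(f') - (n/B)·h_{σ,b}(f)  (mod n)`. -/
noncomputable def offset (n B : ℕ) (σ b f f' : ZMod n) : ZMod n :=
  σ * (f' - b) - ((n / B : ℕ) : ZMod n) * ((hround n B σ b f : ℤ) : ZMod n)

/-- The representative of `ℓ ∈ Z_n` in `(-n/2, n/2]`. -/
def rep (n : ℕ) (ℓ : ZMod n) : ℤ :=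
  if (ℓ.val : ℤ) ≤ (n : ℤ) / 2 then (ℓ.val : ℤ) else (ℓ.val : ℤ) - (n : ℤ)

/-- A flat filter with `B` buckets and sharpness `F`. -/
def IsFlatFilter (n B F : ℕ) (G : ZMod n → ℝ) : Prop :=
  (∀ f : ZMod n, G (-f) = G f) ∧
  (∀ f : ZMod n, 0 ≤ G f ∧ G f ≤ 1) ∧
  (∀ f : ZMod n, (|rep n f| : ℝ) ≤ (n : ℝ) / (2 * B) → 1 - (1 / 4 : ℝ) ^ (F - 1) ≤ G f) ∧
  (∀ f : ZMod n, (n : ℝ) / B ≤ (|rep n f| : ℝ) →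
    G f ≤ (1 / 4 : ℝ) ^ (F - 1) * ((n : ℝ) / (B * (|rep n f| : ℝ))) ^ (F - 1))

/-- Discrete Fourier transform on `Z_n`. -/
noncomputable def dftZ (n : ℕ) [NeZero n] (x : ZMod n → ℂ) : ZMod n → ℂ := fun f =>
  (1 / (Real.sqrt n) : ℂ) *
    ∑ j : ZMod n, x j * Complex.exp (2 * (Real.pi : ℂ) * Complex.I *
      ((j.val * f.val : ℕ) : ℂ) / (n : ℂ))

/-- The value `(m_r)_{h_r(f)}` of the `r`-th measurement vector at bucket `h_r(f)`:
`∑_{f'} Ĝ_{o_{f,σ,b}(f')} x̂_{f'}`. -/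
noncomputable def measAt (n B : ℕ) [NeZero n] (G : ZMod n → ℝ) (σ b f : ZMod n)
    (xhat : ZMod n → ℂ) : ℂ :=
  ∑ f' : ZMod n, (G (offset n B σ b f f') : ℂ) * xhat f'

/-- Uniform sample space of hashing pairs `(σ, b)` with `σ` odd. -/
def hashPairs (n : ℕ) [NeZero n] : Finset (ZMod n × ZMod n) :=
  (Finset.univ.filter fun σ : ZMod n => Odd σ.val) ×ˢ Finset.univ


/-- Counting integers in a residue class inside an interval whose length is
divisible by the modulus. -/
lemma count_residue_le (A len M r : ℤ) (hM : 0 < M) (hdvd : M ∣ len) :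
    (((Finset.Ico A (A + len)).filter fun t => M ∣ t - r)).card ≤ (len / M).toNat := by
  classical
  have hcard : ((Finset.Ico (0:ℤ) (len / M))).card = (len / M).toNat := by
    rw [Int.card_Ico]; simp
  rw [← hcard]
  apply Finset.card_le_card_of_injOn (fun t => (t - A) / M)
  · intro t ht
    simp only [Finset.mem_coe, Finset.mem_filter, Finset.mem_Ico] at ht ⊢
    obtain ⟨⟨h1, h2⟩, h3⟩ := ht
    constructor
    · exact Int.ediv_nonneg (by omega) hM.le
    · have h4 := Int.mul_ediv_add_emod (t - A) M
      have h5 := Int.emod_nonneg (t - A) hM.ne'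
      have h6 : M * ((t - A) / M) ≤ t - A := by omega
      have h7 : len / M * M = len := Int.ediv_mul_cancel hdvd
      have h8 : M * ((t - A) / M) < M * (len / M) := by nlinarith
      exact lt_of_mul_lt_mul_left h8 hM.le
  · intro t₁ h₁ t₂ h₂ heq
    simp only [Finset.mem_filter, Finset.mem_Ico, Finset.mem_coe] at h₁ h₂
    have e₁ := Int.mul_ediv_add_emod (t₁ - A) M
    have e₂ := Int.mul_ediv_add_emod (t₂ - A) M
    have hm : (t₁ - A) % M = (t₂ - A) % M := by
      rw [Int.emod_eq_emod_iff_emod_sub_eq_zero]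
      have : M ∣ (t₁ - A) - (t₂ - A) := by
        have := dvd_sub h₁.2 h₂.2
        have heq2 : (t₁ - r) - (t₂ - r) = (t₁ - A) - (t₂ - A) := by ring
        rwa [heq2] at this
      exact Int.emod_eq_zero_of_dvd this
    simp only at heq
    rw [heq] at e₁
    omega

/-- If `σ` is odd and `σ * d = j` in `ZMod n`, `n = 2^a`, and `d.val = 2^k * m` with `m`
odd, then `j ≡ 2^k  (mod 2^(k+1))`. -/
lemma sigma_cong (n : ℕ) [NeZero n] (a k : ℕ) (hn : n = 2^a) (hka : k < a)
    (d : ZMod n) (m : ℕ) (hm : ¬ 2 ∣ m) (hdv : d.val = 2^k * m)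
    (σ : ZMod n) (hσ : Odd σ.val) (j : ℤ) (hj : σ * d = ((j : ℤ) : ZMod n)) :
    (2^(k+1) : ℤ) ∣ j - 2^k := by
  have hσc : ((σ.val : ℤ) : ZMod n) = σ := by
    push_cast
    simp [ZMod.natCast_val, ZMod.cast_id]
  have hdc : ((d.val : ℤ) : ZMod n) = d := by
    push_cast
    simp [ZMod.natCast_val, ZMod.cast_id]
  have h0 : (((σ.val : ℤ) * (d.val : ℤ) - j : ℤ) : ZMod n) = 0 := by
    push_cast
    rw [show ((σ.val : ℕ) : ZMod n) = σ by simp [ZMod.natCast_val, ZMod.cast_id],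
        show ((d.val : ℕ) : ZMod n) = d by simp [ZMod.natCast_val, ZMod.cast_id], hj, sub_self]
  have h1 : (n : ℤ) ∣ ((σ.val : ℤ) * (d.val : ℤ) - j) :=
    (ZMod.intCast_zmod_eq_zero_iff_dvd _ n).mp h0
  have h2 : (2^(k+1) : ℤ) ∣ (n : ℤ) := by
    rw [hn]; push_cast; exact pow_dvd_pow 2 hka
  have h3 : (2^(k+1) : ℤ) ∣ ((σ.val : ℤ) * (d.val : ℤ) - j) := h2.trans h1
  have hmodd : Odd m := Nat.odd_iff.mpr (Nat.two_dvd_ne_zero.mp hm)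
  obtain ⟨t, ht⟩ := hσ.mul hmodd
  have hc : (d.val : ℤ) = 2^k * m := by exact_mod_cast congrArg (Nat.cast : ℕ → ℤ) hdv
  have hc2 : (σ.val : ℤ) * m = 2 * t + 1 := by exact_mod_cast congrArg (Nat.cast : ℕ → ℤ) ht
  have h4 : (σ.val : ℤ) * (d.val : ℤ) - 2^k = 2^(k+1) * t := by
    linear_combination (σ.val : ℤ) * hc + (2^k : ℤ) * hc2
  have h5 : j - 2^k = ((σ.val : ℤ) * (d.val : ℤ) - 2^k) - ((σ.val : ℤ) * (d.val : ℤ) - j) := by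
    ring
  rw [h5]
  exact dvd_sub ⟨t, h4⟩ h3

/-- The fiber of `σ ↦ σ * d` over any point, restricted to odd `σ`, has at most `2^k`
elements, where `2^k` is the 2-adic part of `d.val`. -/
lemma sigma_fiber_card_le (n : ℕ) [NeZero n] (a k : ℕ) (hn : n = 2^a) (hk : k ≤ a)
    (d : ZMod n) (m : ℕ) (hm : ¬ 2 ∣ m) (hdv : d.val = 2^k * m) (ℓ : ZMod n) :
    ((Finset.univ.filter fun σ : ZMod n => Odd σ.val ∧ σ * d = ℓ)).card ≤ 2^k := by
  classical
  have hcard : (Finset.range (2^k)).card = 2^k := Finset.card_range _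
  rw [← hcard]
  apply Finset.card_le_card_of_injOn (fun σ => σ.val / 2^(a-k))
  · intro σ hσ
    simp only [Finset.mem_coe, Finset.mem_range]
    have hv : σ.val < n := ZMod.val_lt σ
    rw [Nat.div_lt_iff_lt_mul (Nat.pow_pos (by norm_num : 0 < 2) : 0 < 2^(a-k))]
    calc σ.val < n := hv
    _ = 2^k * 2^(a-k) := by rw [hn, ← pow_add]; congr 1; omega
  · intro σ₁ h₁ σ₂ h₂ heq
    simp only [Finset.mem_coe, Finset.mem_filter] at h₁ h₂
    have hzero : ((((σ₁.val : ℤ) - σ₂.val) * (d.val : ℤ) : ℤ) : ZMod n) = 0 := by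
      push_cast
      rw [show ((σ₁.val : ℕ) : ZMod n) = σ₁ by simp [ZMod.natCast_val, ZMod.cast_id],
          show ((σ₂.val : ℕ) : ZMod n) = σ₂ by simp [ZMod.natCast_val, ZMod.cast_id],
          show ((d.val : ℕ) : ZMod n) = d by simp [ZMod.natCast_val, ZMod.cast_id]]
      rw [sub_mul, h₁.2.2, h₂.2.2, sub_self]
    have h1 : (n : ℤ) ∣ (((σ₁.val : ℤ) - σ₂.val) * (d.val : ℤ)) :=
      (ZMod.intCast_zmod_eq_zero_iff_dvd _ n).mp hzero
    have hc : (d.val : ℤ) = 2^k * m := by exact_mod_cast congrArg (Nat.cast : ℕ → ℤ) hdv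
    have h2 : ((2:ℤ)^(a-k) * 2^k) ∣ ((((σ₁.val : ℤ) - σ₂.val) * m) * 2^k) := by
      have hnn : (n : ℤ) = 2^(a-k) * 2^k := by
        rw [hn]; push_cast; rw [← pow_add]; congr 1; omega
      rw [← hnn]
      calc (n:ℤ) ∣ (((σ₁.val : ℤ) - σ₂.val) * (d.val : ℤ)) := h1
      _ = (((σ₁.val : ℤ) - σ₂.val) * m) * 2^k := by rw [hc]; ring
    have h3 : (2:ℤ)^(a-k) ∣ (((σ₁.val : ℤ) - σ₂.val) * m) :=
      (mul_dvd_mul_iff_right (pow_ne_zero k (two_ne_zero))).mp h2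
    have hm' : ¬ (2:ℤ) ∣ (m : ℤ) := by exact_mod_cast hm
    have h4 : (2:ℤ)^(a-k) ∣ ((σ₁.val : ℤ) - σ₂.val) :=
      Int.prime_two.pow_dvd_of_dvd_mul_right _ hm' h3
    have hd₁ := Nat.div_add_mod σ₁.val (2^(a-k))
    have hd₂ := Nat.div_add_mod σ₂.val (2^(a-k))
    have hr₁ : σ₁.val % 2^(a-k) < 2^(a-k) := Nat.mod_lt _ (Nat.pow_pos (by norm_num : 0 < 2))
    have hr₂ : σ₂.val % 2^(a-k) < 2^(a-k) := Nat.mod_lt _ (Nat.pow_pos (by norm_num : 0 < 2))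
    simp only at heq
    have e1 : (2^(a-k) : ℤ) * ((σ₁.val / 2^(a-k) : ℕ) : ℤ) + ((σ₁.val % 2^(a-k) : ℕ) : ℤ)
        = (σ₁.val : ℤ) := by exact_mod_cast congrArg (Nat.cast : ℕ → ℤ) hd₁
    have e2 : (2^(a-k) : ℤ) * ((σ₂.val / 2^(a-k) : ℕ) : ℤ) + ((σ₂.val % 2^(a-k) : ℕ) : ℤ)
        = (σ₂.val : ℤ) := by exact_mod_cast congrArg (Nat.cast : ℕ → ℤ) hd₂
    rw [heq] at e1
    have h5 : (σ₁.val : ℤ) - σ₂.val =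
        ((σ₁.val % 2^(a-k) : ℕ) : ℤ) - ((σ₂.val % 2^(a-k) : ℕ) : ℤ) := by linarith
    have hb₁ : ((σ₁.val % 2^(a-k) : ℕ) : ℤ) < 2^(a-k) := by exact_mod_cast hr₁
    have hb₂ : ((σ₂.val % 2^(a-k) : ℕ) : ℤ) < 2^(a-k) := by exact_mod_cast hr₂
    have hnn₁ : (0:ℤ) ≤ ((σ₁.val % 2^(a-k) : ℕ) : ℤ) := Int.natCast_nonneg _
    have hnn₂ : (0:ℤ) ≤ ((σ₂.val % 2^(a-k) : ℕ) : ℤ) := Int.natCast_nonneg _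
    have h6 : (σ₁.val : ℤ) - σ₂.val = 0 := by
      apply Int.eq_zero_of_abs_lt_dvd h4
      rw [h5, abs_sub_lt_iff]
      constructor <;> linarith
    have : σ₁.val = σ₂.val := by omega
    exact ZMod.val_injective n this


/-- The centered remainder of `u.val` modulo `L`, lying in `[-L2, L2)` when `L = 2 * L2`. -/
def eZfun (n L L2 : ℕ) (u : ZMod n) : ℤ :=
  (u.val : ℤ) - L * (((u.val : ℤ) + L2) / L)

lemma eZfun_mem (n L L2 : ℕ) (hL2 : L = 2 * L2) (hL0 : 0 < L) (u : ZMod n) :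
    eZfun n L L2 u ∈ Finset.Ico (-(L2:ℤ)) (L2:ℤ) := by
  have hL0' : (0:ℤ) < (L:ℤ) := by exact_mod_cast hL0
  have h1 := Int.emod_nonneg ((u.val:ℤ) + L2) hL0'.ne'
  have h2 := Int.emod_lt_of_pos ((u.val:ℤ) + L2) hL0'
  have h3 := Int.mul_ediv_add_emod ((u.val:ℤ) + L2) (L:ℤ)
  have hc : (L:ℤ) = 2 * L2 := by exact_mod_cast hL2
  simp only [Finset.mem_Ico, eZfun]
  omega

lemma eZfun_dvd (n L L2 : ℕ) (u : ZMod n) (w : ℤ) (h : eZfun n L L2 u = w) :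
    (L:ℤ) ∣ (u.val:ℤ) - w := by
  refine ⟨((u.val : ℤ) + L2) / L, ?_⟩
  rw [← h]; simp only [eZfun]; ring

lemma rep_cast (n : ℕ) [NeZero n] (ℓ : ZMod n) : ((rep n ℓ : ℤ) : ZMod n) = ℓ := by
  unfold rep
  split <;> push_cast <;>
    simp [ZMod.natCast_val, ZMod.cast_id, ZMod.natCast_self]

/-- Bound on the moment generating function of `Ĝ_{o_{f,σ,b}(f')}` for a uniformly random
hashing pair `(σ, b)` with `σ` odd:
`E exp(λ Ĝ_{o_{f,σ,b}(f')}) ≤ e^{λε}[(2/B + 1/n)(e^{λ(1-ε)} - 1) + 1]`. -/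
theorem mgf_bound
    (n B : ℕ) [NeZero n] (ha : ∃ a, n = 2 ^ a) (hb : ∃ c, B = 2 ^ c) (hBn : B < n)
    (ε : ℝ) (hε0 : 0 < ε) (hε1 : ε < 1)
    (G : ZMod n → ℝ) (hG01 : ∀ ℓ, 0 ≤ G ℓ ∧ G ℓ ≤ 1)
    (hGtail : ∀ ℓ : ZMod n,
      ¬ (-(((n / B : ℕ) : ℤ)) < rep n ℓ ∧ rep n ℓ < ((n / B : ℕ) : ℤ)) → G ℓ ≤ ε)
    (f f' : ZMod n) (hff : f ≠ f') (lam : ℝ) (hlam : 0 ≤ lam) :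
    (∑ p ∈ hashPairs n, Real.exp (lam * G (offset n B p.1 p.2 f f'))) /
        ((hashPairs n).card : ℝ) ≤
      Real.exp (lam * ε) *
        ((2 / B + 1 / n) * (Real.exp (lam * (1 - ε)) - 1) + 1) := by
  classical
  obtain ⟨a, hn⟩ := ha
  obtain ⟨c, hBc⟩ := hb
  have hn0 : 0 < n := Nat.pos_of_ne_zero (NeZero.ne n)
  have hB0 : 0 < B := by rw [hBc]; positivity
  have hca : c < a := by
    have := hBn
    rw [hn, hBc] at this
    exact (Nat.pow_lt_pow_iff_right (by norm_num)).mp this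
  set L : ℕ := n / B with hLdef
  have hBdvd : B ∣ n := by rw [hn, hBc]; exact pow_dvd_pow 2 hca.le
  have hBL : B * L = n := Nat.mul_div_cancel' hBdvd
  have hLpow : L = 2^(a-c) := by rw [hLdef, hn, hBc]; exact Nat.pow_div hca.le (by norm_num)
  set L2 : ℕ := 2^(a-c-1) with hL2def
  have hL2 : L = 2 * L2 := by
    rw [hLpow, hL2def, ← pow_succ']
    congr 1
    omega
  have hL0 : 0 < L := by rw [hLpow]; positivity
  have hL20 : 0 < L2 := by rw [hL2def]; positivity
  set d : ZMod n := f' - f with hd_def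
  have hd : d ≠ 0 := sub_ne_zero.mpr (Ne.symm hff)
  have hdval0 : d.val ≠ 0 := fun h => hd ((ZMod.val_eq_zero d).mp h)
  obtain ⟨k, m, hm2, hdv⟩ := Nat.exists_eq_pow_mul_and_not_dvd hdval0 2 (by norm_num)
  have hm0 : 0 < m := Nat.pos_of_ne_zero (by rintro rfl; rw [mul_zero] at hdv; exact hdval0 hdv)
  have hka : k < a := by
    have h1 : 2^k ≤ d.val := by
      rw [hdv]
      exact Nat.le_mul_of_pos_right _ hm0
    have h2 : d.val < n := ZMod.val_lt d
    have h3 : (2:ℕ)^k < 2^a := by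
      rw [← hn]
      exact lt_of_le_of_lt h1 h2
    exact (Nat.pow_lt_pow_iff_right (by norm_num)).mp h3
  -- the rounding formula
  have hround_eq : ∀ σ b : ZMod n,
      hround n B σ b f = (((σ*(f-b)).val : ℤ) + L2) / (L : ℤ) := by
    intro σ b
    have hnr : (0:ℝ) < n := by exact_mod_cast hn0
    have hBr : (0:ℝ) < B := by exact_mod_cast hB0
    have hLr : (0:ℝ) < L := by exact_mod_cast hL0
    have hL2r : (0:ℝ) < L2 := by exact_mod_cast hL20
    have hnBL : (n:ℝ) = B * L := by exact_mod_cast hBL.symm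
    have hL2c : (L:ℝ) = 2 * L2 := by exact_mod_cast hL2
    show round ((B : ℝ) / (n : ℝ) * (((σ * (f - b)).val : ℕ) : ℝ)) = _
    rw [round_eq]
    have key : (B:ℝ)/(n:ℝ) * (((σ * (f - b)).val : ℕ) : ℝ) + 1/2
        = (((((σ * (f - b)).val : ℤ) + L2 : ℤ)) : ℝ) / ((L:ℕ):ℝ) := by
      rw [hnBL]
      push_cast
      rw [hL2c]
      field_simp
    rw [key]
    have hcast : (((((σ * (f - b)).val : ℤ) + L2 : ℤ)) : ℝ) / ((L:ℕ):ℝ)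
        = ((((((σ * (f - b)).val : ℤ) + L2 : ℤ) : ℚ) / ((L:ℕ):ℚ) : ℚ) : ℝ) := by
      push_cast
      ring
    rw [hcast, Rat.floor_cast, Rat.floor_intCast_div_natCast]
  -- the offset formula
  have off_eq : ∀ σ b : ZMod n, offset n B σ b f f' =
      σ * d + ((eZfun n L L2 (σ * (f - b)) : ℤ) : ZMod n) := by
    intro σ b
    have hu : (((σ*(f-b)).val : ℕ) : ZMod n) = σ*(f-b) := by
      simp [ZMod.natCast_val, ZMod.cast_id]
    show σ * (f' - b) - ((n / B : ℕ) : ZMod n) * ((hround n B σ b f : ℤ) : ZMod n) = _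
    rw [hround_eq σ b]
    simp only [eZfun]
    push_cast
    rw [hu, hd_def]
    ring
  -- predicates
  set Q : ZMod n → ℤ → Prop := fun v w =>
    -((L:ℕ):ℤ) < rep n (v + ((w : ℤ) : ZMod n)) ∧ rep n (v + ((w : ℤ) : ZMod n)) < ((L:ℕ):ℤ)
    with hQ
  set P : ZMod n × ZMod n → Prop := fun p =>
    -((L:ℕ):ℤ) < rep n (offset n B p.1 p.2 f f') ∧
      rep n (offset n B p.1 p.2 f f') < ((L:ℕ):ℤ) with hP
  set odds : Finset (ZMod n) := Finset.univ.filter (fun σ : ZMod n => Odd σ.val) with hodds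
  have hHP : hashPairs n = odds ×ˢ Finset.univ := by
    rw [hodds, hashPairs]
  -- units
  have hunit : ∀ σ : ZMod n, Odd σ.val → IsUnit σ := by
    intro σ hσ
    have hco : Nat.Coprime σ.val n := by
      have h := Nat.Coprime.pow_right a hσ.coprime_two_right
      rwa [← hn] at h
    have h := (ZMod.isUnit_iff_coprime σ.val n).mpr hco
    rwa [show ((σ.val : ℕ) : ZMod n) = σ by simp [ZMod.natCast_val, ZMod.cast_id]] at h
  -- the fiber of b ↦ eZfun (σ (f - b)) has at most B elements
  have fib_u : ∀ (σ : ZMod n), Odd σ.val → ∀ w : ℤ,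
      (Finset.univ.filter fun b : ZMod n => eZfun n L L2 (σ * (f - b)) = w).card ≤ B := by
    intro σ hσ w
    have step1 : (Finset.univ.filter fun b : ZMod n => eZfun n L L2 (σ * (f - b)) = w).card
        ≤ (Finset.univ.filter fun u : ZMod n => eZfun n L L2 u = w).card := by
      apply Finset.card_le_card_of_injOn (fun b => σ * (f - b))
      · intro b hb
        simp only [Finset.mem_coe, Finset.mem_filter, Finset.mem_univ, true_and] at hb ⊢
        exact hb
      · intro b₁ _ b₂ _ hbe
        have h2 := (hunit σ hσ).mul_left_cancel hbe
        have : b₁ = b₂ := by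
          have := congrArg (fun x => f - x) h2.symm
          simpa using sub_right_injective h2
        exact this
    have step2 : (Finset.univ.filter fun u : ZMod n => eZfun n L L2 u = w).card
        ≤ (((Finset.Ico (0:ℤ) ((0:ℤ) + (n:ℤ))).filter fun t => (L:ℤ) ∣ t - w)).card := by
      apply Finset.card_le_card_of_injOn (fun u => (u.val : ℤ))
      · intro u hu
        simp only [Finset.mem_coe, Finset.mem_filter, Finset.mem_univ, true_and] at hu
        simp only [Finset.mem_coe, Finset.mem_filter, Finset.mem_Ico, zero_add]
        refine ⟨⟨Int.natCast_nonneg _, ?_⟩, eZfun_dvd n L L2 u w hu⟩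
        exact_mod_cast ZMod.val_lt u
      · intro u₁ _ u₂ _ hue
        have hue' : ((u₁.val : ℕ) : ℤ) = ((u₂.val : ℕ) : ℤ) := hue
        exact ZMod.val_injective n (by exact_mod_cast hue')
    have step3 : (((Finset.Ico (0:ℤ) ((0:ℤ) + (n:ℤ))).filter fun t => (L:ℤ) ∣ t - w)).card
        ≤ B := by
      have hLz : (0:ℤ) < (L:ℤ) := by exact_mod_cast hL0
      have hdl : (L:ℤ) ∣ (n:ℤ) := by
        refine ⟨(B:ℤ), ?_⟩
        exact_mod_cast (by rw [mul_comm] at hBL; exact hBL.symm : n = L * B)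
      have hcnt := count_residue_le 0 (n:ℤ) (L:ℤ) w hLz hdl
      have hval : ((n:ℤ) / (L:ℤ)).toNat = B := by
        have he : (n:ℤ) = (L:ℤ) * (B:ℤ) := by
          exact_mod_cast (by rw [mul_comm] at hBL; exact hBL.symm : n = L * B)
        rw [he, Int.mul_ediv_cancel_left _ hLz.ne']
        simp
      rwa [hval] at hcnt
    exact step1.trans (step2.trans step3)
  -- key per-w bound
  have key_w : ∀ w ∈ Finset.Ico (-(L2:ℤ)) (L2:ℤ),
      (odds.filter fun σ => Q (σ * d) w).card ≤ L := by
    intro w hw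
    simp only [Finset.mem_Ico] at hw
    have hsub : (odds.filter fun σ => Q (σ * d) w)
        ⊆ (Finset.Ioo (-((L:ℕ):ℤ)) ((L:ℕ):ℤ)).biUnion
          (fun t => Finset.univ.filter fun σ : ZMod n =>
            Odd σ.val ∧ σ * d = ((t - w : ℤ) : ZMod n)) := by
      intro σ hσmem
      rw [hodds] at hσmem
      simp only [Finset.mem_filter, Finset.mem_univ, true_and] at hσmem
      obtain ⟨hσodd, hQw⟩ := hσmem
      rw [hQ] at hQw
      refine Finset.mem_biUnion.mpr ⟨rep n (σ*d + ((w : ℤ) : ZMod n)), ?_, ?_⟩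
      · simp only [Finset.mem_Ioo]
        exact hQw
      · simp only [Finset.mem_filter, Finset.mem_univ, true_and]
        refine ⟨hσodd, ?_⟩
        push_cast
        rw [rep_cast]
        ring
    have hfib : ∀ t ∈ Finset.Ioo (-((L:ℕ):ℤ)) ((L:ℕ):ℤ),
        (Finset.univ.filter fun σ : ZMod n =>
          Odd σ.val ∧ σ * d = ((t - w : ℤ) : ZMod n)).card
          ≤ if (2^(k+1) : ℤ) ∣ t - (w + 2^k) then 2^k else 0 := by
      intro t ht
      by_cases hcong : (2^(k+1) : ℤ) ∣ t - (w + 2^k)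
      · rw [if_pos hcong]
        exact sigma_fiber_card_le n a k hn hka.le d m hm2 hdv _
      · rw [if_neg hcong]
        rw [Nat.le_zero, Finset.card_eq_zero, Finset.filter_eq_empty_iff]
        rintro σ - ⟨hσodd, hσd⟩
        have := sigma_cong n a k hn hka d m hm2 hdv σ hσodd (t - w) hσd
        rw [sub_sub] at this
        exact hcong this
    have hchain : (odds.filter fun σ => Q (σ * d) w).card
        ≤ ((Finset.Ioo (-((L:ℕ):ℤ)) ((L:ℕ):ℤ)).filter
            fun t => (2^(k+1) : ℤ) ∣ t - (w + 2^k)).card * 2^k := by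
      calc (odds.filter fun σ => Q (σ * d) w).card
          ≤ ((Finset.Ioo (-((L:ℕ):ℤ)) ((L:ℕ):ℤ)).biUnion
            (fun t => Finset.univ.filter fun σ : ZMod n =>
              Odd σ.val ∧ σ * d = ((t - w : ℤ) : ZMod n))).card := Finset.card_le_card hsub
        _ ≤ ∑ t ∈ Finset.Ioo (-((L:ℕ):ℤ)) ((L:ℕ):ℤ),
            (Finset.univ.filter fun σ : ZMod n =>
              Odd σ.val ∧ σ * d = ((t - w : ℤ) : ZMod n)).card := Finset.card_biUnion_le
        _ ≤ ∑ t ∈ Finset.Ioo (-((L:ℕ):ℤ)) ((L:ℕ):ℤ),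
            if (2^(k+1) : ℤ) ∣ t - (w + 2^k) then 2^k else 0 := Finset.sum_le_sum hfib
        _ = _ := by
            rw [Finset.sum_ite, Finset.sum_const, Finset.sum_const_zero, add_zero, smul_eq_mul]
    by_cases hkac : k ≤ a - c
    · -- 2^k ≤ L
      have hpos : (0:ℤ) < 2^(k+1) := by positivity
      have h2L : (2 * (L:ℤ)) = (2^(k+1) : ℤ) * ((2^(a-c-k) : ℕ) : ℤ) := by
        rw [hLpow]
        push_cast
        rw [← pow_add]
        rw [show 2 * (2:ℤ)^(a-c) = 2^(a-c+1) by rw [pow_succ]; ring]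
        congr 1
        omega
      have hdvd2L : (2^(k+1) : ℤ) ∣ 2 * (L:ℤ) := ⟨_, h2L⟩
      have hcount : ((Finset.Ioo (-((L:ℕ):ℤ)) ((L:ℕ):ℤ)).filter
          fun t => (2^(k+1) : ℤ) ∣ t - (w + 2^k)).card ≤ 2^(a-c-k) := by
        have hsub2 : ((Finset.Ioo (-((L:ℕ):ℤ)) ((L:ℕ):ℤ)).filter
            fun t => (2^(k+1) : ℤ) ∣ t - (w + 2^k))
            ⊆ ((Finset.Ico (-((L:ℕ):ℤ)) ((-((L:ℕ):ℤ)) + 2*(L:ℤ))).filter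
            fun t => (2^(k+1) : ℤ) ∣ t - (w + 2^k)) := by
          apply Finset.filter_subset_filter
          intro t ht
          simp only [Finset.mem_Ioo] at ht
          simp only [Finset.mem_Ico]
          omega
        have hcnt := count_residue_le (-((L:ℕ):ℤ)) (2*(L:ℤ)) (2^(k+1)) (w + 2^k) hpos hdvd2L
        have hval : ((2*(L:ℤ)) / (2^(k+1) : ℤ)).toNat = 2^(a-c-k) := by
          rw [h2L, Int.mul_ediv_cancel_left _ hpos.ne']
          exact Int.toNat_natCast _
        rw [hval] at hcnt
        exact (Finset.card_le_card hsub2).trans hcnt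
      calc (odds.filter fun σ => Q (σ * d) w).card
          ≤ _ := hchain
        _ ≤ 2^(a-c-k) * 2^k := Nat.mul_le_mul_right _ hcount
        _ = L := by rw [hLpow, ← pow_add]; congr 1; omega
    · -- 2^k ≥ 2 L : empty
      have hempty : ((Finset.Ioo (-((L:ℕ):ℤ)) ((L:ℕ):ℤ)).filter
          fun t => (2^(k+1) : ℤ) ∣ t - (w + 2^k)).card = 0 := by
        rw [Finset.card_eq_zero, Finset.filter_eq_empty_iff]
        intro t ht hdvd
        simp only [Finset.mem_Ioo] at ht
        obtain ⟨z, hz⟩ := hdvd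
        have h2k : 2 * (L:ℤ) ≤ 2^k := by
          have h1 : ((2:ℕ)^(a-c+1) : ℤ) ≤ ((2:ℕ)^k : ℤ) := by
            exact_mod_cast Nat.pow_le_pow_right (by norm_num) (by omega)
          have h2L' : 2 * (L:ℤ) = ((2:ℕ)^(a-c+1) : ℤ) := by
            rw [hLpow]; push_cast; rw [pow_succ]; ring
          rw [h2L']
          exact_mod_cast h1
        have hMk : (0:ℤ) < 2^k := by positivity
        have hL2z : (L:ℤ) = 2 * (L2:ℤ) := by exact_mod_cast hL2
        have hz' : t - w = 2^k + (2^k * z) * 2 := by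
          rw [pow_succ] at hz
          linarith [hz]
        rcases le_or_gt 0 z with hz0 | hz0
        · have hpos2 : 0 ≤ (2:ℤ)^k * z := mul_nonneg hMk.le hz0
          linarith [ht.1, ht.2, hw.1, hw.2]
        · have hneg2 : (2:ℤ)^k * z ≤ 2^k * (-1) :=
            mul_le_mul_of_nonneg_left (by omega) hMk.le
          linarith [ht.1, ht.2, hw.1, hw.2]
      calc (odds.filter fun σ => Q (σ * d) w).card
          ≤ _ := hchain
        _ = 0 := by rw [hempty, zero_mul]
        _ ≤ L := Nat.zero_le L
  -- per-σ bound
  have inner : ∀ σ ∈ odds,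
      (Finset.univ.filter fun b : ZMod n => P (σ, b)).card
        ≤ ∑ w ∈ Finset.Ico (-(L2:ℤ)) (L2:ℤ), if Q (σ * d) w then B else 0 := by
    intro σ hσo
    have hσ : Odd σ.val := by
      rw [hodds] at hσo
      simpa using hσo
    have hPb : ∀ b : ZMod n, P (σ, b) ↔ Q (σ * d) (eZfun n L L2 (σ * (f - b))) := by
      intro b
      rw [hP, hQ]
      simp only
      rw [off_eq σ b]
    calc (Finset.univ.filter fun b : ZMod n => P (σ, b)).card
        = ∑ b : ZMod n, if Q (σ * d) (eZfun n L L2 (σ * (f - b))) then 1 else 0 := by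
          rw [Finset.card_filter]
          exact Finset.sum_congr rfl fun b _ => if_congr (hPb b) rfl rfl
      _ = ∑ w ∈ Finset.Ico (-(L2:ℤ)) (L2:ℤ),
            ∑ b ∈ Finset.univ.filter (fun b : ZMod n => eZfun n L L2 (σ * (f - b)) = w),
              (if Q (σ * d) (eZfun n L L2 (σ * (f - b))) then 1 else 0) :=
          (Finset.sum_fiberwise_of_maps_to
            (fun b _ => eZfun_mem n L L2 hL2 hL0 (σ * (f - b))) _).symm
      _ = ∑ w ∈ Finset.Ico (-(L2:ℤ)) (L2:ℤ),
            if Q (σ * d) w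
            then (Finset.univ.filter (fun b : ZMod n => eZfun n L L2 (σ * (f - b)) = w)).card
            else 0 := by
          refine Finset.sum_congr rfl fun w _ => ?_
          have hstep : ∀ b ∈ Finset.univ.filter
              (fun b : ZMod n => eZfun n L L2 (σ * (f - b)) = w),
              (if Q (σ * d) (eZfun n L L2 (σ * (f - b))) then 1 else 0)
                = (if Q (σ * d) w then 1 else 0) := by
            intro b hb
            have := (Finset.mem_filter.mp hb).2
            rw [this]
          rw [Finset.sum_congr rfl hstep, Finset.sum_const, smul_eq_mul]
          split_ifs <;> simp
      _ ≤ ∑ w ∈ Finset.Ico (-(L2:ℤ)) (L2:ℤ), if Q (σ * d) w then B else 0 := by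
          refine Finset.sum_le_sum fun w _ => ?_
          split_ifs
          · exact fib_u σ hσ w
          · exact le_refl 0
  -- the main counting bound
  have hK : ((hashPairs n).filter P).card ≤ n * L := by
    have h1 : ((hashPairs n).filter P).card
        = ∑ σ ∈ odds, (Finset.univ.filter fun b : ZMod n => P (σ, b)).card := by
      rw [hHP, Finset.card_filter, Finset.sum_product]
      exact Finset.sum_congr rfl fun σ _ => (Finset.card_filter _ _).symm
    calc ((hashPairs n).filter P).card
        = ∑ σ ∈ odds, (Finset.univ.filter fun b : ZMod n => P (σ, b)).card := h1
      _ ≤ ∑ σ ∈ odds, ∑ w ∈ Finset.Ico (-(L2:ℤ)) (L2:ℤ),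
            if Q (σ * d) w then B else 0 := Finset.sum_le_sum inner
      _ = ∑ w ∈ Finset.Ico (-(L2:ℤ)) (L2:ℤ), ∑ σ ∈ odds,
            if Q (σ * d) w then B else 0 := Finset.sum_comm
      _ = ∑ w ∈ Finset.Ico (-(L2:ℤ)) (L2:ℤ),
            (odds.filter fun σ => Q (σ * d) w).card * B := by
          refine Finset.sum_congr rfl fun w _ => ?_
          rw [Finset.sum_ite, Finset.sum_const, Finset.sum_const_zero, add_zero, smul_eq_mul]
      _ ≤ ∑ w ∈ Finset.Ico (-(L2:ℤ)) (L2:ℤ), L * B :=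
          Finset.sum_le_sum fun w hw => Nat.mul_le_mul_right B (key_w w hw)
      _ = (Finset.Ico (-(L2:ℤ)) (L2:ℤ)).card * (L * B) := by
          rw [Finset.sum_const, smul_eq_mul]
      _ = n * L := by
          rw [Int.card_Ico]
          rw [show (L2:ℤ) - -(L2:ℤ) = ((2 * L2 : ℕ) : ℤ) by push_cast; ring]
          rw [Int.toNat_natCast, ← hL2]
          rw [show L * (L * B) = (B * L) * L by ring, hBL]
  -- cardinality of the sample space
  have hodds_card : 2^(a-1) ≤ odds.card := by
    have hinj : ∀ j ∈ Finset.range (2^(a-1)), ((2*j+1 : ℕ) : ZMod n) ∈ odds := by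
      intro j hj
      simp only [Finset.mem_range] at hj
      have hlt : 2*j+1 < n := by
        rw [hn, show a = (a-1)+1 by omega, pow_succ]
        omega
      rw [hodds]
      simp only [Finset.mem_filter, Finset.mem_univ, true_and]
      rw [ZMod.val_cast_of_lt hlt]
      exact ⟨j, by omega⟩
    have := Finset.card_le_card_of_injOn (fun j : ℕ => ((2*j+1 : ℕ) : ZMod n)) hinj ?_
    · simpa using this
    · intro j₁ h₁ j₂ h₂ he
      simp only [Finset.mem_coe, Finset.mem_range] at h₁ h₂
      have hlt₁ : 2*j₁+1 < n := by
        rw [hn, show a = (a-1)+1 by omega, pow_succ]; omega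
      have hlt₂ : 2*j₂+1 < n := by
        rw [hn, show a = (a-1)+1 by omega, pow_succ]; omega
      have := congrArg ZMod.val he
      rw [ZMod.val_cast_of_lt hlt₁, ZMod.val_cast_of_lt hlt₂] at this
      omega
  have hHcard : (hashPairs n).card = odds.card * n := by
    rw [hHP, Finset.card_product, Finset.card_univ, ZMod.card]
  have hn2 : n = 2 * 2^(a-1) := by
    have hpow2 : (2:ℕ)^a = 2^(a-1) * 2 := by
      rw [← pow_succ]
      congr 1
      omega
    rw [hn, hpow2]
    ring
  have hH0 : 0 < (hashPairs n).card := by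
    rw [hHcard]
    exact Nat.mul_pos (lt_of_lt_of_le (Nat.pow_pos (by norm_num : 0 < 2)) hodds_card) hn0
  -- analytic part
  set X := Real.exp lam - Real.exp (lam * ε) with hX
  have hX0 : 0 ≤ X := by
    rw [hX, sub_nonneg, Real.exp_le_exp]
    nlinarith
  have hpoint : ∀ p ∈ hashPairs n,
      Real.exp (lam * G (offset n B p.1 p.2 f f'))
        ≤ Real.exp (lam * ε) + (if P p then X else 0) := by
    intro p _
    by_cases hp : P p
    · rw [if_pos hp, hX]
      have hG1 : G (offset n B p.1 p.2 f f') ≤ 1 := (hG01 _).2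
      have h1 : Real.exp (lam * G (offset n B p.1 p.2 f f')) ≤ Real.exp lam :=
        Real.exp_le_exp.mpr (by nlinarith)
      linarith
    · rw [if_neg hp, add_zero]
      have hGe : G (offset n B p.1 p.2 f f') ≤ ε := by
        apply hGtail
        rw [hP] at hp
        exact hp
      exact Real.exp_le_exp.mpr (by nlinarith)
  have hsum : (∑ p ∈ hashPairs n, Real.exp (lam * G (offset n B p.1 p.2 f f')))
      ≤ ((hashPairs n).card : ℝ) * Real.exp (lam * ε)
        + (((hashPairs n).filter P).card : ℝ) * X := by
    calc (∑ p ∈ hashPairs n, Real.exp (lam * G (offset n B p.1 p.2 f f')))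
        ≤ ∑ p ∈ hashPairs n, (Real.exp (lam * ε) + (if P p then X else 0)) :=
          Finset.sum_le_sum hpoint
      _ = ((hashPairs n).card : ℝ) * Real.exp (lam * ε)
          + (((hashPairs n).filter P).card : ℝ) * X := by
          rw [Finset.sum_add_distrib, Finset.sum_const, ← Finset.sum_filter,
            Finset.sum_const, nsmul_eq_mul, nsmul_eq_mul]
  -- final numeric comparison
  have hHr : (0:ℝ) < ((hashPairs n).card : ℝ) := by exact_mod_cast hH0
  rw [div_le_iff₀ hHr]
  have hKH : (((hashPairs n).filter P).card : ℝ) ≤ (2 / B + 1 / n) * ((hashPairs n).card : ℝ) := by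
    have hKr : (((hashPairs n).filter P).card : ℝ) ≤ (n:ℝ) * (L:ℝ) := by exact_mod_cast hK
    have hHge : ((2^(a-1) : ℕ) : ℝ) * (n:ℝ) ≤ ((hashPairs n).card : ℝ) := by
      rw [hHcard]
      have h := Nat.mul_le_mul_right n hodds_card
      exact_mod_cast h
    have hnBL : (n:ℝ) = (B:ℝ) * (L:ℝ) := by exact_mod_cast hBL.symm
    have hn2r : (n:ℝ) = 2 * ((2^(a-1) : ℕ) : ℝ) := by exact_mod_cast hn2
    have hBr : (0:ℝ) < (B:ℝ) := by exact_mod_cast hB0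
    have hnr : (0:ℝ) < (n:ℝ) := by exact_mod_cast hn0
    have he1 : (2/(B:ℝ)) * (((2^(a-1) : ℕ) : ℝ) * (n:ℝ)) = (n:ℝ) * (L:ℝ) := by
      rw [div_mul_eq_mul_div, div_eq_iff hBr.ne']
      linear_combination (n:ℝ) * hnBL - (n:ℝ) * hn2r
    have he2 : (2/(B:ℝ)) * ((hashPairs n).card : ℝ) ≤ (2/(B:ℝ) + 1/(n:ℝ)) * ((hashPairs n).card : ℝ) := by
      apply mul_le_mul_of_nonneg_right _ hHr.le
      have : (0:ℝ) ≤ 1/(n:ℝ) := by positivity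
      linarith
    calc (((hashPairs n).filter P).card : ℝ) ≤ (n:ℝ) * (L:ℝ) := hKr
      _ = (2/(B:ℝ)) * (((2^(a-1) : ℕ) : ℝ) * (n:ℝ)) := he1.symm
      _ ≤ (2/(B:ℝ)) * ((hashPairs n).card : ℝ) := by
          apply mul_le_mul_of_nonneg_left hHge (by positivity)
      _ ≤ _ := he2
  have hexp : Real.exp lam = Real.exp (lam * ε) * Real.exp (lam * (1-ε)) := by
    rw [← Real.exp_add]
    congr 1
    ring
  calc (∑ p ∈ hashPairs n, Real.exp (lam * G (offset n B p.1 p.2 f f')))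
      ≤ ((hashPairs n).card : ℝ) * Real.exp (lam * ε)
        + (((hashPairs n).filter P).card : ℝ) * X := hsum
    _ ≤ ((hashPairs n).card : ℝ) * Real.exp (lam * ε)
        + ((2 / B + 1 / n) * ((hashPairs n).card : ℝ)) * X := by
        have := mul_le_mul_of_nonneg_right hKH hX0
        linarith
    _ = Real.exp (lam * ε) * ((2 / B + 1 / n) * (Real.exp (lam * (1 - ε)) - 1) + 1)
        * ((hashPairs n).card : ℝ) := by
        rw [hX, hexp]
        ring
end

section
/- Let n and B be powers of two with B < n, ε ∈ (0, 1), and Ĝ : Z_n → [0, 1] with Ĝ_ℓ ≤ ε whenever the representative of ℓ in (−n/2, n/2] lies outside (−n/B, n/B). Fix f ≠ f' in Z_n, integers 0 ≤ r ≤ d, fixed pairs (σ_1, b_1), …, (σ_r, b_r) (each σ_ℓ odd), and let (σ_{r+1}, b_{r+1}), …, (σ_d, b_d) be independent, with each σ_ℓ uniformly distributed over the odd residues modulo n and each b_ℓ uniformly distributed over Z_n. Then for every λ > 0 and every β ∈ ℝ, setting z = Σ_{ℓ=1}^r Ĝ_{o_{f,σ_ℓ,b_ℓ}(f')} and M(λ)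 = e^{λε}·[(2/B + 1/n)·(e^{λ(1−ε)} − 1) + 1], one has P(Σ_{ℓ=1}^d Ĝ_{o_{f,σ_ℓ,b_ℓ}(f')} ≥ β) ≤ e^{−λβ}·e^{λz}·(M(λ))^{d−r}. -/
open Finset

/-- periodic counting -/
lemma periodic_count (P : ℕ) (hP : 0 < P) (χ : ℕ → Prop) [DecidablePred χ]
    (hper : ∀ t, χ (t + P) ↔ χ t) (q : ℕ) :
    ((Finset.range (q * P)).filter χ).card = q * ((Finset.range P).filter χ).card := by
  have hper' : ∀ k t, χ (t + k * P) ↔ χ t := by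
    intro k
    induction k with
    | zero => simp
    | succ k ih =>
      intro t
      have h1 : t + (k+1) * P = (t + k * P) + P := by ring
      rw [h1, hper, ih]
  have hkey : ∀ t : ℕ, χ t ↔ χ (t % P) := by
    intro t
    conv_lhs => rw [← Nat.div_add_mod t P]
    rw [show P * (t / P) + t % P = t % P + (t / P) * P by ring]
    exact hper' (t / P) (t % P)
  have hcard : ((Finset.range q) ×ˢ ((Finset.range P).filter χ)).card
      = q * ((Finset.range P).filter χ).card := by
    rw [Finset.card_product, Finset.card_range]
  rw [← hcard]
  have e1 : ∀ p : ℕ × ℕ, p.2 < P → (p.1 * P + p.2) / P = p.1 := by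
    intro p h2
    rw [Nat.mul_comm, Nat.mul_add_div hP, Nat.div_eq_of_lt h2, Nat.add_zero]
  have e2 : ∀ p : ℕ × ℕ, p.2 < P → (p.1 * P + p.2) % P = p.2 := by
    intro p h2
    rw [Nat.mul_comm, Nat.mul_add_mod, Nat.mod_eq_of_lt h2]
  apply Finset.card_bij' (fun t _ => (t / P, t % P)) (fun p _ => p.1 * P + p.2)
  · intro t ht
    simp only [Finset.mem_range, Finset.mem_filter, Finset.mem_product] at *
    obtain ⟨ht, hχ⟩ := ht
    exact ⟨Nat.div_lt_of_lt_mul (by rw [Nat.mul_comm]; exact ht), Nat.mod_lt _ hP,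
      (hkey t).mp hχ⟩
  · intro p hp
    simp only [Finset.mem_range, Finset.mem_filter, Finset.mem_product] at *
    obtain ⟨h1, h2, h3⟩ := hp
    constructor
    · have h4 : (p.1 + 1) * P ≤ q * P := Nat.mul_le_mul_right _ (by omega)
      calc p.1 * P + p.2 < (p.1 + 1) * P := by nlinarith
        _ ≤ q * P := h4
    · rw [hkey, e2 p h2]; exact h3
  · intro t ht
    exact Nat.div_add_mod' t P
  · intro p hp
    simp only [Finset.mem_range, Finset.mem_filter, Finset.mem_product] at hp
    obtain ⟨h1, h2, h3⟩ := hp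
    exact Prod.ext (e1 p h2) (e2 p h2)

lemma card_mod_filter_le (K p r q : ℕ) (hp : 0 < p) (hq : K ≤ p * q) :
    ((Finset.range K).filter (fun w => w % p = r)).card ≤ q := by
  have : ((Finset.range K).filter (fun w => w % p = r)).card ≤ (Finset.range q).card := by
    apply Finset.card_le_card_of_injOn (fun w => w / p)
    · intro w hw
      simp only [Finset.mem_coe, Finset.mem_range, Finset.mem_filter] at *
      exact Nat.div_lt_of_lt_mul (lt_of_lt_of_le hw.1 hq)
    · intro w1 h1 w2 h2 he
      simp only [Finset.coe_filter, Finset.mem_range, Set.mem_setOf_eq] at h1 h2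
      have e1 := Nat.div_add_mod w1 p
      have e2 := Nat.div_add_mod w2 p
      simp only at he
      rw [he] at e1
      omega
  simpa using this

lemma card_mod_filter_zero (K p r : ℕ) (hr : K ≤ r) (hrp : r < p) :
    ((Finset.range K).filter (fun w => w % p = r)).card = 0 := by
  rw [Finset.card_eq_zero, Finset.filter_eq_empty_iff]
  intro w hw
  simp only [Finset.mem_range] at hw
  have : w % p = w := Nat.mod_eq_of_lt (by omega)
  omega

lemma card_mod_filter_eq (q P s : ℕ) (hP : 0 < P) (hs : s < P) :
    ((Finset.range (q * P)).filter (fun w => w % P = s)).card = q := by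
  rw [periodic_count P hP _ (fun t => by simp [Nat.add_mod_right]) q]
  have : (Finset.range P).filter (fun w => w % P = s) = {s} := by
    ext w
    simp only [Finset.mem_filter, Finset.mem_range, Finset.mem_singleton]
    constructor
    · rintro ⟨h1, h2⟩; rwa [Nat.mod_eq_of_lt h1] at h2
    · rintro rfl; exact ⟨hs, Nat.mod_eq_of_lt hs⟩
  rw [this, Finset.card_singleton, Nat.mul_one]

lemma odd_val_mul {n : ℕ} [NeZero n] (hn2 : 2 ∣ n) (x y : ZMod n) (hy : Odd y.val) :
    Odd ((x * y).val) ↔ Odd x.val := by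
  rw [Nat.odd_iff, Nat.odd_iff] at *
  rw [ZMod.val_mul, Nat.mod_mod_of_dvd _ hn2, Nat.mul_mod, hy, Nat.mul_one]
  omega

lemma odd_filter_card (n : ℕ) (hn2 : 2 ∣ n) [NeZero n]
    (P : ZMod n → Prop) [DecidablePred P] :
    (Finset.univ.filter fun σ : ZMod n => Odd σ.val ∧ P σ).card
      = ((Finset.range (n / 2)).filter fun t => P ((2 * t + 1 : ℕ) : ZMod n)).card := by
  obtain ⟨k, hk⟩ := hn2
  refine Finset.card_bij' (fun σ _ => σ.val / 2) (fun t _ => ((2 * t + 1 : ℕ) : ZMod n))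
    ?hi ?hj ?left ?right
  case hi =>
    intro σ hσ
    simp only [Finset.mem_filter, Finset.mem_univ, true_and, Finset.mem_range] at hσ ⊢
    obtain ⟨hodd, hP⟩ := hσ
    have hv : σ.val < n := ZMod.val_lt σ
    rw [Nat.odd_iff] at hodd
    constructor
    · omega
    · have h2 : 2 * (σ.val / 2) + 1 = σ.val := by omega
      rw [h2, ZMod.natCast_rightInverse σ]
      exact hP
  case hj =>
    intro t ht
    simp only [Finset.mem_filter, Finset.mem_univ, true_and, Finset.mem_range] at ht ⊢
    obtain ⟨ht, hP⟩ := ht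
    have hlt : 2 * t + 1 < n := by omega
    rw [ZMod.val_cast_of_lt hlt]
    exact ⟨⟨t, by ring⟩, hP⟩
  case left =>
    intro σ hσ
    simp only [Finset.mem_filter, Finset.mem_univ, true_and] at hσ
    have hodd := hσ.1
    rw [Nat.odd_iff] at hodd
    have h2 : 2 * (σ.val / 2) + 1 = σ.val := by omega
    show ((2 * (σ.val / 2) + 1 : ℕ) : ZMod n) = σ
    rw [h2, ZMod.natCast_rightInverse σ]
  case right =>
    intro t ht
    simp only [Finset.mem_range, Finset.mem_filter] at ht
    have hlt : 2 * t + 1 < n := by omega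
    show (((2 * t + 1 : ℕ) : ZMod n)).val / 2 = t
    rw [ZMod.val_cast_of_lt hlt]
    omega

lemma odd_mul_unit_card (n : ℕ) [NeZero n] (hn2 : 2 ∣ n) (u : (ZMod n)ˣ)
    (hu : Odd ((u : ZMod n)).val) (P : ZMod n → Prop) [DecidablePred P] :
    (Finset.univ.filter fun σ : ZMod n => Odd σ.val ∧ P (σ * u)).card
      = (Finset.univ.filter fun τ : ZMod n => Odd τ.val ∧ P τ).card := by
  have hn1 : 1 < n := by
    rcases hn2 with ⟨k, hk⟩
    have := NeZero.pos n; omega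
  have huinv : Odd ((↑u⁻¹ : ZMod n)).val := by
    have h1 : ((↑u⁻¹ : ZMod n) * u).val = 1 := by
      rw [Units.inv_mul, ZMod.val_one_eq_one_mod]
      exact Nat.mod_eq_of_lt hn1
    by_contra hodd
    have h2 := (odd_val_mul hn2 (↑u⁻¹ : ZMod n) u hu)
    rw [h1] at h2
    exact hodd (h2.mp (by exact ⟨0, by ring⟩))
  refine Finset.card_bij' (fun σ _ => σ * u) (fun τ _ => τ * ↑u⁻¹) ?hi ?hj ?left ?right
  case hi =>
    intro σ hσ
    simp only [Finset.mem_filter, Finset.mem_univ, true_and] at hσ ⊢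
    exact ⟨(odd_val_mul hn2 σ u hu).mpr hσ.1, hσ.2⟩
  case hj =>
    intro τ hτ
    simp only [Finset.mem_filter, Finset.mem_univ, true_and] at hτ ⊢
    refine ⟨(odd_val_mul hn2 τ _ huinv).mpr hτ.1, ?_⟩
    rw [mul_assoc, Units.inv_mul, mul_one]
    exact hτ.2
  case left =>
    intro σ _
    show σ * ↑u * ↑u⁻¹ = σ
    rw [mul_assoc, Units.mul_inv, mul_one]
  case right =>
    intro τ _
    show τ * ↑u⁻¹ * ↑u = τ
    rw [mul_assoc, Units.inv_mul, mul_one]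

lemma b_count (n : ℕ) [NeZero n] (σ f : ZMod n) (hσ : IsUnit σ) (Q : ℕ → Prop)
    [DecidablePred Q] :
    (Finset.univ.filter fun b : ZMod n => Q ((σ * (f - b)).val)).card
      = ((Finset.range n).filter Q).card := by
  obtain ⟨u, rfl⟩ := hσ
  refine Finset.card_bij' (fun b _ => ((u : ZMod n) * (f - b)).val)
    (fun w _ => f - (↑u⁻¹ : ZMod n) * (w : ZMod n)) ?hi ?hj ?left ?right
  case hi =>
    intro b hb
    simp only [Finset.mem_filter, Finset.mem_univ, true_and, Finset.mem_range] at hb ⊢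
    exact ⟨ZMod.val_lt _, hb⟩
  case hj =>
    intro w hw
    simp only [Finset.mem_filter, Finset.mem_univ, true_and, Finset.mem_range] at hw ⊢
    have h1 : (u : ZMod n) * (f - (f - (↑u⁻¹ : ZMod n) * (w : ZMod n))) = (w : ZMod n) := by
      rw [sub_sub_cancel, ← mul_assoc, Units.mul_inv, one_mul]
    rw [h1, ZMod.val_cast_of_lt hw.1]
    exact hw.2
  case left =>
    intro b _
    show f - (↑u⁻¹ : ZMod n) * ((((u : ZMod n) * (f - b)).val : ℕ) : ZMod n) = b
    rw [ZMod.natCast_rightInverse, ← mul_assoc, Units.inv_mul, one_mul, sub_sub_cancel]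
  case right =>
    intro w hw
    simp only [Finset.mem_filter, Finset.mem_range] at hw
    show ((u : ZMod n) * (f - (f - (↑u⁻¹ : ZMod n) * (w : ZMod n)))).val = w
    rw [sub_sub_cancel, ← mul_assoc, Units.mul_inv, one_mul, ZMod.val_cast_of_lt hw.1]

lemma round_div_nat (s m : ℕ) (hs : s < m) :
    round ((s : ℝ) / m) = if 2 * s < m then 0 else 1 := by
  have hm0 : 0 < m := by omega
  have hm : (0:ℝ) < m := by exact_mod_cast hm0
  have hsm : (s:ℝ) < m := by exact_mod_cast hs
  rw [round_eq]
  split_ifs with h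
  · apply Int.floor_eq_zero_iff.mpr
    have h2 : (2:ℝ) * s < m := by exact_mod_cast h
    constructor
    · positivity
    · have : (s:ℝ)/m < 1/2 := by rw [div_lt_div_iff₀ hm (by norm_num)]; nlinarith
      linarith
  · have h2 : (m:ℝ) ≤ 2*s := by
      push_cast at h ⊢
      exact_mod_cast not_lt.mp h
    have h1 : (1:ℝ) ≤ (s:ℝ)/m + 1/2 := by
      rw [← sub_le_iff_le_add, show (1:ℝ) - 1/2 = 1/2 by norm_num, div_le_div_iff₀ (by norm_num) hm]
      nlinarith
    have h3 : (s:ℝ)/m + 1/2 < 2 := by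
      have : (s:ℝ)/m < 1 := (div_lt_one hm).mpr hsm
      linarith
    apply Int.floor_eq_iff.mpr
    constructor
    · push_cast; linarith
    · push_cast; linarith

lemma offset_eq (n B m : ℕ) [NeZero n] (hB0 : 0 < B) (hm0 : 0 < m) (hnm : n = B * m)
    (σ b f f' : ZMod n) :
    offset n B σ b f f' = σ * (f' - f) +
      (((((σ * (f - b)).val % m : ℕ) : ℤ)
        - (m : ℤ) * (if 2 * ((σ * (f - b)).val % m) < m then 0 else 1) : ℤ) : ZMod n) := by
  set u := σ * (f - b) with hu_def
  set s := u.val % m with hs_def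
  set q := u.val / m with hq_def
  have hqs : m * q + s = u.val := Nat.div_add_mod u.val m
  have hs : s < m := Nat.mod_lt _ hm0
  have hmR : (m:ℝ) ≠ 0 := by positivity
  have hBR : (B:ℝ) ≠ 0 := by positivity
  have hround_eq : hround n B σ b f = (q : ℤ) + (if 2 * s < m then 0 else 1) := by
    unfold hround
    have hvalR : (u.val : ℝ) = m * q + s := by exact_mod_cast congrArg (Nat.cast (R := ℝ)) hqs.symm
    have hBr : ((B:ℝ)/(n:ℝ)) * ((u.val : ℕ) : ℝ) = (q : ℝ) + (s : ℝ)/(m : ℝ) := by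
      rw [hvalR, hnm]
      push_cast
      field_simp
    rw [hBr, round_natCast_add, round_div_nat s m hs]
  have hnB : n / B = m := by rw [hnm]; exact Nat.mul_div_cancel_left m hB0
  have hu : ((u.val : ℕ) : ZMod n) = u := ZMod.natCast_rightInverse u
  have h3 : (m : ZMod n) * (q : ZMod n) = u - (s : ZMod n) := by
    have h4 : ((m * q + s : ℕ) : ZMod n) = u := by rw [hqs]; exact hu
    push_cast at h4
    linear_combination h4
  show σ * (f' - b) - ((n / B : ℕ) : ZMod n) * ((hround n B σ b f : ℤ) : ZMod n) = _
  rw [hround_eq, hnB]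
  push_cast
  rw [hu_def] at h3
  linear_combination (-(1 : ZMod n)) * h3

lemma rep_window (n m : ℕ) [NeZero n] (hm2 : 2 ≤ m) (h2m : 2 * m ≤ n) (x : ZMod n) :
    (-(m:ℤ) < rep n x ∧ rep n x < m) ↔ (x + ((m - 1 : ℕ) : ZMod n)).val < 2 * m - 1 := by
  have hv : x.val < n := ZMod.val_lt x
  have hval : (x + ((m-1 : ℕ) : ZMod n)).val = (x.val + (m-1)) % n := by
    rw [ZMod.val_add, ZMod.val_cast_of_lt (by omega)]
  have hmod : (x.val + (m-1)) % n = if x.val + (m-1) < n then x.val + (m-1)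
      else x.val + (m-1) - n := by
    split_ifs with h2
    · exact Nat.mod_eq_of_lt h2
    · rw [Nat.mod_eq_sub_mod (le_of_not_gt h2)]
      exact Nat.mod_eq_of_lt (by omega)
  rw [hval, hmod]
  unfold rep
  split_ifs with h hh hh
  · omega
  · omega
  · omega
  · omega

lemma count_sigma (n a j g w0 : ℕ) [NeZero n] (hn : n = 2 ^ a) (ha1 : 1 ≤ a) (hja : j < a)
    (hga : g + 1 ≤ a) (u : (ZMod n)ˣ) (hu : Odd ((u : ZMod n)).val)
    (hw0 : w0 < 2 ^ (g + 1)) :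
    (Finset.univ.filter fun σ : ZMod n =>
        Odd σ.val ∧ (σ * ↑u * ((2 ^ j : ℕ) : ZMod n) + ((w0 : ℕ) : ZMod n)).val
          < 2 * 2 ^ g - 1).card ≤ 2 ^ g := by
  classical
  have hn2 : 2 ∣ n := hn ▸ dvd_pow_self 2 (by omega)
  set K := 2 * 2 ^ g - 1 with hK
  set z := 2 ^ j + w0 with hz
  have h1 : (Finset.univ.filter fun σ : ZMod n =>
      Odd σ.val ∧ (σ * ↑u * ((2 ^ j : ℕ) : ZMod n) + ((w0 : ℕ) : ZMod n)).val < K).card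
      = (Finset.univ.filter fun τ : ZMod n =>
        Odd τ.val ∧ (τ * ((2 ^ j : ℕ) : ZMod n) + ((w0 : ℕ) : ZMod n)).val < K).card :=
    odd_mul_unit_card n hn2 u hu
      (fun x => (x * ((2 ^ j : ℕ) : ZMod n) + ((w0 : ℕ) : ZMod n)).val < K)
  rw [h1, odd_filter_card n hn2]
  have hval : ∀ t : ℕ, (((2*t+1 : ℕ) : ZMod n) * ((2 ^ j : ℕ) : ZMod n)
      + ((w0 : ℕ) : ZMod n)).val = (2^(j+1) * t + z) % n := by
    intro t
    rw [← Nat.cast_mul, ← Nat.cast_add, ZMod.val_natCast]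
    congr 1
    rw [hz]
    ring
  have hfe : ((Finset.range (n / 2)).filter fun t =>
        (((2 * t + 1 : ℕ) : ZMod n) * ((2 ^ j : ℕ) : ZMod n)
          + ((w0 : ℕ) : ZMod n)).val < K)
      = ((Finset.range (n / 2)).filter fun t => (2^(j+1) * t + z) % n < K) := by
    apply Finset.filter_congr
    intro t _
    rw [hval t]
  rw [hfe]
  set P0 := 2 ^ (a - 1 - j) with hP0
  have hP0pos : 0 < P0 := Nat.pow_pos (by norm_num)
  have hnP0 : 2 ^ (j+1) * P0 = n := by
    rw [hP0, hn, ← pow_add]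
    congr 1
    omega
  have hhalf : n / 2 = 2 ^ j * P0 := by
    rw [hP0, hn, ← pow_add]
    have : 2 ^ a = 2 * 2 ^ (j + (a - 1 - j)) := by rw [← pow_succ']; congr 1; omega
    omega
  have hper : ∀ t, ((2^(j+1) * (t + P0) + z) % n < K) ↔ ((2^(j+1) * t + z) % n < K) := by
    intro t
    have : 2^(j+1) * (t + P0) + z = (2^(j+1) * t + z) + n := by
      rw [← hnP0]; ring
    rw [this, Nat.add_mod_right]
  rw [hhalf, periodic_count P0 hP0pos _ hper (2 ^ j)]
  -- now bound cnt := #{t ∈ range P0 : (2^(j+1)*t+z) % n < K}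
  set p := 2 ^ (j+1) with hp
  have hppos : 0 < p := Nat.pow_pos (by norm_num)
  have hinj : ((Finset.range P0).filter fun t => (p * t + z) % n < K).card
      ≤ ((Finset.range K).filter fun w => w % p = z % p).card := by
    apply Finset.card_le_card_of_injOn (fun t => (p * t + z) % n)
    · intro t ht
      simp only [Finset.mem_coe, Finset.mem_filter, Finset.mem_range] at ht ⊢
      refine ⟨ht.2, ?_⟩
      rw [Nat.mod_mod_of_dvd _ (⟨P0, hnP0.symm⟩ : p ∣ n), Nat.mul_add_mod]
    · intro t1 h1 t2 h2 he
      simp only [Finset.coe_filter, Finset.mem_range, Set.mem_setOf_eq] at h1 h2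
      simp only at he
      have hmq : (p * t1 + z) % n = (p * t2 + z) % n := he
      rcases le_total t1 t2 with hle | hle
      · have hdvd : n ∣ (p * t2 + z) - (p * t1 + z) :=
          (Nat.modEq_iff_dvd' (by exact Nat.add_le_add_right (Nat.mul_le_mul_left _ hle) z)).mp hmq
        obtain ⟨k, hk⟩ := hdvd
        have hd : p * t2 = p * t1 + p * (t2 - t1) := by
          rw [← Nat.mul_add]; congr 1; omega
        have hk2 : p * (t2 - t1) = (p * P0) * k := by
          rw [hnP0]
          omega
        have hk3 : t2 - t1 = P0 * k := Nat.eq_of_mul_eq_mul_left hppos (by rw [hk2]; ring)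
        rcases Nat.eq_zero_or_pos k with rfl | hkpos
        · omega
        · exfalso
          have h6 : P0 ≤ P0 * k := Nat.le_mul_of_pos_right _ hkpos
          omega
      · have hdvd : n ∣ (p * t1 + z) - (p * t2 + z) :=
          (Nat.modEq_iff_dvd' (by exact Nat.add_le_add_right (Nat.mul_le_mul_left _ hle) z)).mp hmq.symm
        obtain ⟨k, hk⟩ := hdvd
        have hd : p * t1 = p * t2 + p * (t1 - t2) := by
          rw [← Nat.mul_add]; congr 1; omega
        have hk2 : p * (t1 - t2) = (p * P0) * k := by
          rw [hnP0]
          omega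
        have hk3 : t1 - t2 = P0 * k := Nat.eq_of_mul_eq_mul_left hppos (by rw [hk2]; ring)
        rcases Nat.eq_zero_or_pos k with rfl | hkpos
        · omega
        · exfalso
          have h6 : P0 ≤ P0 * k := Nat.le_mul_of_pos_right _ hkpos
          omega
  rcases le_or_gt j g with hjg | hjg
  · -- j ≤ g
    have hmodle : ((Finset.range K).filter fun w => w % p = z % p).card ≤ 2 ^ (g - j) := by
      apply card_mod_filter_le K p (z % p) (2 ^ (g - j)) hppos
      have h7 : p * 2 ^ (g - j) = 2 ^ (g + 1) := by
        rw [hp, ← pow_add]; congr 1; omega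
      have h8 : (2:ℕ) ^ (g+1) = 2 * 2 ^ g := by rw [pow_succ']
      omega
    calc 2 ^ j * ((Finset.range P0).filter fun t => (p * t + z) % n < K).card
        ≤ 2 ^ j * 2 ^ (g - j) := Nat.mul_le_mul_left _ (le_trans hinj hmodle)
      _ = 2 ^ g := by rw [← pow_add]; congr 1; omega
  · -- g + 1 ≤ j : count is zero
    have hzlt : z < p := by
      rw [hz, hp]
      have h1 : 2 ^ (g+1) ≤ 2 ^ j := Nat.pow_le_pow_right (by norm_num) (by omega)
      have h2 : (2:ℕ) ^ (j+1) = 2 ^ j + 2 ^ j := by rw [pow_succ]; ring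
      omega
    have hKz : K ≤ z % p := by
      rw [Nat.mod_eq_of_lt hzlt, hz, hK]
      have h1 : 2 * 2^g = 2 ^ (g+1) := by rw [pow_succ]; ring
      have h2 : 2 ^ (g+1) ≤ 2 ^ j := Nat.pow_le_pow_right (by norm_num) (by omega)
      omega
    have hzero : ((Finset.range K).filter fun w => w % p = z % p).card = 0 :=
      card_mod_filter_zero K p (z % p) hKz (Nat.mod_lt _ hppos)
    have hc0 : ((Finset.range P0).filter fun t => (p * t + z) % n < K).card = 0 := by
      omega
    rw [hc0, Nat.mul_zero]
    exact Nat.zero_le _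

open scoped Classical in
lemma key_count (n B a c : ℕ) [NeZero n] (hn : n = 2 ^ a) (hB : B = 2 ^ c)
    (hc1 : 1 ≤ c) (hca : c < a) (f f' : ZMod n) (hff : f ≠ f') :
    (((hashPairs n).filter (fun p : ZMod n × ZMod n =>
        -(((n / B : ℕ) : ℤ)) < rep n (offset n B p.1 p.2 f f')
          ∧ rep n (offset n B p.1 p.2 f f') < ((n / B : ℕ) : ℤ))).card)
      ≤ n * (n / B) := by
  have hg1 : 1 ≤ a - c := by omega
  have hga : (a - c) + 1 ≤ a := by omega
  set g := a - c with hg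
  have hm : n / B = 2 ^ g := by
    rw [hn, hB, hg, Nat.pow_div (by omega) (by norm_num)]
  rw [hm]
  set m := 2 ^ g with hmdef
  have hB0 : 0 < B := by rw [hB]; positivity
  have hm0 : 0 < m := by rw [hmdef]; positivity
  have hnm : n = B * m := by rw [hn, hB, hmdef, ← pow_add]; congr 1; omega
  have hm2 : 2 ≤ m := by
    calc 2 = 2^1 := rfl
    _ ≤ 2 ^ g := Nat.pow_le_pow_right (by norm_num) hg1
  have h2m : 2 * m ≤ n := by
    rw [hn, hmdef]
    calc 2 * 2^g = 2^(g+1) := by rw [pow_succ]; ring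
    _ ≤ 2^a := Nat.pow_le_pow_right (by norm_num) (by omega)
  have ha1 : 1 ≤ a := by omega
  have hn2 : 2 ∣ n := by rw [hn]; exact dvd_pow_self 2 (by omega)
  -- the difference Δ
  set Δ := f' - f with hΔdef
  have hΔ0 : Δ ≠ 0 := sub_ne_zero.mpr (Ne.symm hff)
  have hΔval : Δ.val ≠ 0 := fun h => hΔ0 ((ZMod.val_eq_zero Δ).mp h)
  obtain ⟨j, M, hModd, hval⟩ := Nat.exists_eq_two_pow_mul_odd hΔval
  have hM1 : 1 ≤ M := hModd.pos
  have hja : j < a := by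
    by_contra hcon
    push_neg at hcon
    have h1 : 2 ^ a ≤ 2 ^ j := Nat.pow_le_pow_right (by norm_num) hcon
    have h2 : Δ.val < n := ZMod.val_lt Δ
    have h3 : 2 ^ j ≤ 2 ^ j * M := Nat.le_mul_of_pos_right _ (by omega)
    omega
  -- M is a unit
  have hM2 : ¬ 2 ∣ M := by
    rw [Nat.odd_iff] at hModd; omega
  have hMcop : Nat.Coprime M n := by
    have h1 : Nat.Coprime M (2 ^ a) :=
      Nat.Coprime.pow_right _ (Nat.coprime_comm.mp ((Nat.prime_two.coprime_iff_not_dvd).mpr hM2))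
    rwa [← hn] at h1
  set u : (ZMod n)ˣ := ZMod.unitOfCoprime M hMcop with hu_def
  have hu_coe : (u : ZMod n) = (M : ZMod n) := ZMod.coe_unitOfCoprime M hMcop
  have hu_odd : Odd ((u : ZMod n)).val := by
    rw [hu_coe, ZMod.val_natCast, Nat.odd_iff, Nat.mod_mod_of_dvd _ hn2]
    rw [Nat.odd_iff] at hModd
    exact hModd
  have hΔu : ∀ σ : ZMod n, σ * Δ = σ * ↑u * ((2 ^ j : ℕ) : ZMod n) := by
    intro σ
    have h1 : Δ = ((2 ^ j * M : ℕ) : ZMod n) := by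
      rw [← hval, ZMod.natCast_rightInverse Δ]
    rw [h1, hu_coe]
    push_cast
    ring
  have hσu : ∀ σ : ZMod n, Odd σ.val → IsUnit σ := by
    intro σ hσ
    have hcop : Nat.Coprime σ.val n := by
      have h1 : Nat.Coprime σ.val (2 ^ a) := by
        apply Nat.Coprime.pow_right
        apply Nat.coprime_comm.mp
        apply (Nat.prime_two.coprime_iff_not_dvd).mpr
        rw [Nat.odd_iff] at hσ; omega
      rwa [← hn] at h1
    have h1 := (ZMod.isUnit_iff_coprime σ.val n).mpr hcop
    rwa [ZMod.natCast_rightInverse σ] at h1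
  -- delta as a natural number
  set W : ℕ → ℕ := fun s => if 2 * s < m then s + (m - 1) else s - 1 with hWdef
  have hWlt : ∀ s, s < m → W s < 2 ^ (g + 1) := by
    intro s hs
    have h1 : (2:ℕ) ^ (g+1) = 2 * m := by rw [hmdef, pow_succ]; ring
    simp only [hWdef]
    split_ifs with h <;> omega
  have hCs : ∀ s : ℕ, s < m →
      ((((s : ℤ) - (m:ℤ) * (if 2 * s < m then 0 else 1) : ℤ)) : ZMod n)
        + ((m - 1 : ℕ) : ZMod n) = ((W s : ℕ) : ZMod n) := by
    intro s hs
    simp only [hWdef]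
    split_ifs with h
    · rw [Nat.cast_add, Nat.cast_sub (by omega : 1 ≤ m)]
      push_cast
      ring
    · rw [Nat.cast_sub (by omega : 1 ≤ s), Nat.cast_sub (by omega : 1 ≤ m)]
      push_cast
      ring
  -- R: the per-(σ, s) condition
  set R : ZMod n → ℕ → Prop := fun σ s => (σ * Δ + ((W s : ℕ) : ZMod n)).val < 2 * m - 1
    with hRdef
  -- step 1: product split
  have e1 : (((hashPairs n).filter (fun p : ZMod n × ZMod n =>
        -((m : ℤ)) < rep n (offset n B p.1 p.2 f f')
          ∧ rep n (offset n B p.1 p.2 f f') < ((m : ℕ) : ℤ))).card)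
      = ∑ σ ∈ Finset.univ.filter (fun σ : ZMod n => Odd σ.val),
          (Finset.univ.filter (fun b : ZMod n =>
            -((m : ℤ)) < rep n (offset n B σ b f f')
              ∧ rep n (offset n B σ b f f') < ((m : ℕ) : ℤ))).card := by
    rw [Finset.card_filter]
    show ∑ p ∈ (Finset.univ.filter fun σ : ZMod n => Odd σ.val) ×ˢ Finset.univ, _ = _
    rw [Finset.sum_product]
    exact Finset.sum_congr rfl fun σ _ => (Finset.card_filter _ _).symm
  rw [e1]
  -- step 2: per-σ count
  have e2 : ∀ σ : ZMod n, Odd σ.val →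
      (Finset.univ.filter (fun b : ZMod n =>
        -((m : ℤ)) < rep n (offset n B σ b f f')
          ∧ rep n (offset n B σ b f f') < ((m : ℕ) : ℤ))).card
      = B * ((Finset.range m).filter (fun s => R σ s)).card := by
    intro σ hσ
    have hcongr : (Finset.univ.filter (fun b : ZMod n =>
        -((m : ℤ)) < rep n (offset n B σ b f f')
          ∧ rep n (offset n B σ b f f') < ((m : ℕ) : ℤ))).card
        = (Finset.univ.filter (fun b : ZMod n => R σ (((σ * (f - b)).val) % m))).card := by
      congr 1
      apply Finset.filter_congr
      intro b _
      rw [offset_eq n B m hB0 hm0 hnm σ b f f', ← hΔdef]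
      rw [rep_window n m hm2 h2m]
      simp only [hRdef]
      rw [add_assoc, hCs _ (Nat.mod_lt _ hm0)]
    rw [hcongr, b_count n σ f (hσu σ hσ) (fun w => R σ (w % m))]
    rw [show Finset.range n = Finset.range (B * m) from by rw [← hnm]]
    rw [periodic_count m hm0 (fun w => R σ (w % m))
      (fun t => by show R σ ((t + m) % m) ↔ R σ (t % m); rw [Nat.add_mod_right]) B]
    congr 1
    congr 1
    apply Finset.filter_congr
    intro s hs
    rw [Finset.mem_range] at hs
    show R σ (s % m) ↔ R σ s
    rw [Nat.mod_eq_of_lt hs]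
  calc ∑ σ ∈ Finset.univ.filter (fun σ : ZMod n => Odd σ.val),
        (Finset.univ.filter (fun b : ZMod n =>
          -((m : ℤ)) < rep n (offset n B σ b f f')
            ∧ rep n (offset n B σ b f f') < ((m : ℕ) : ℤ))).card
      = B * ∑ σ ∈ Finset.univ.filter (fun σ : ZMod n => Odd σ.val),
          ((Finset.range m).filter (fun s => R σ s)).card := by
        rw [Finset.mul_sum]
        apply Finset.sum_congr rfl
        intro σ hσ
        rw [Finset.mem_filter] at hσ
        exact e2 σ hσ.2
    _ = B * ∑ s ∈ Finset.range m,
          (Finset.univ.filter (fun σ : ZMod n => Odd σ.val ∧ R σ s)).card := by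
        congr 1
        calc ∑ σ ∈ Finset.univ.filter (fun σ : ZMod n => Odd σ.val),
              ((Finset.range m).filter (fun s => R σ s)).card
            = ∑ σ ∈ Finset.univ.filter (fun σ : ZMod n => Odd σ.val),
              ∑ s ∈ Finset.range m, if R σ s then 1 else 0 :=
              Finset.sum_congr rfl fun σ _ => Finset.card_filter _ _
          _ = ∑ s ∈ Finset.range m, ∑ σ ∈ Finset.univ.filter (fun σ : ZMod n => Odd σ.val),
              if R σ s then 1 else 0 := Finset.sum_comm
          _ = ∑ s ∈ Finset.range m,
              (Finset.univ.filter (fun σ : ZMod n => Odd σ.val ∧ R σ s)).card := by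
              apply Finset.sum_congr rfl
              intro s _
              rw [← Finset.card_filter, Finset.filter_filter]
    _ ≤ B * ∑ s ∈ Finset.range m, m := by
        apply Nat.mul_le_mul_left
        apply Finset.sum_le_sum
        intro s hs
        rw [Finset.mem_range] at hs
        have hc := count_sigma n a j g (W s) hn ha1 hja hga u hu_odd (hWlt s hs)
        refine le_trans (le_of_eq ?_) hc
        congr 1
        apply Finset.filter_congr
        intro σ _
        simp only [hRdef, hΔu σ, hmdef]
    _ = B * (m * m) := by rw [Finset.sum_const, Finset.card_range, smul_eq_mul]
    _ = n * m := by rw [hnm]; ring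

open scoped Classical in
set_option maxHeartbeats 1000000 in
/-- Pessimistic-estimator tail bound (conditional Chernoff bound): with the first `r` hashing
pairs fixed and the remaining `d - r` pairs independent and uniform (with odd `σ`), the
probability that `∑_{ℓ=1}^d Ĝ_{o_{f,ℓ}(f')} ≥ β` is at most
`e^{-λβ} e^{λz} M(λ)^{d-r}`, where `z` is the sum over the fixed pairs and
`M(λ) = e^{λε}[(2/B + 1/n)(e^{λ(1-ε)} - 1) + 1]`. -/
theorem pessimistic_estimator_bound
    (n B : ℕ) [NeZero n] (ha : ∃ a, n = 2 ^ a) (hb : ∃ c, B = 2 ^ c) (hBn : B < n)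
    (ε : ℝ) (hε0 : 0 < ε) (hε1 : ε < 1)
    (G : ZMod n → ℝ) (hG01 : ∀ ℓ, 0 ≤ G ℓ ∧ G ℓ ≤ 1)
    (hGtail : ∀ ℓ : ZMod n,
      ¬ (-(((n / B : ℕ) : ℤ)) < rep n ℓ ∧ rep n ℓ < ((n / B : ℕ) : ℤ)) → G ℓ ≤ ε)
    (f f' : ZMod n) (hff : f ≠ f')
    (d r : ℕ) (hrd : r ≤ d)
    (fixed : Fin r → ZMod n × ZMod n) (hfixed : ∀ ℓ : Fin r, Odd ((fixed ℓ).1).val)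
    (lam : ℝ) (hlam : 0 < lam) (β : ℝ) :
    (((Fintype.piFinset (fun _ : Fin (d - r) => hashPairs n)).filter
        (fun t : Fin (d - r) → ZMod n × ZMod n =>
          β ≤ (∑ ℓ : Fin r, G (offset n B (fixed ℓ).1 (fixed ℓ).2 f f')) +
            ∑ ℓ : Fin (d - r), G (offset n B (t ℓ).1 (t ℓ).2 f f'))).card : ℝ) /
        (((hashPairs n).card : ℝ) ^ (d - r)) ≤
      Real.exp (-lam * β) *
        Real.exp (lam * ∑ ℓ : Fin r, G (offset n B (fixed ℓ).1 (fixed ℓ).2 f f')) *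
        (Real.exp (lam * ε) *
          ((2 / B + 1 / n) * (Real.exp (lam * (1 - ε)) - 1) + 1)) ^ (d - r) := by
  classical
  obtain ⟨a, hn⟩ := ha
  obtain ⟨c, hB⟩ := hb
  have hca : c < a := by
    have h1 := hBn
    rw [hn, hB] at h1
    exact (Nat.pow_lt_pow_iff_right (by norm_num)).mp h1
  have ha1 : 1 ≤ a := by omega
  have hn2 : 2 ∣ n := by rw [hn]; exact dvd_pow_self 2 (by omega)
  have hn2' : 2 ≤ n := by
    calc (2:ℕ) = 2^1 := rfl
    _ ≤ 2^a := Nat.pow_le_pow_right (by norm_num) ha1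
    _ = n := hn.symm
  have hB0 : 0 < B := by rw [hB]; positivity
  have hBdvd : B ∣ n := by rw [hn, hB]; exact pow_dvd_pow 2 (by omega)
  have hnR : (0:ℝ) < n := by positivity
  have hBR : (0:ℝ) < B := by positivity
  set k := d - r with hk
  set S := hashPairs n with hS
  set z : ℝ := ∑ ℓ : Fin r, G (offset n B (fixed ℓ).1 (fixed ℓ).2 f f') with hz
  set Mval : ℝ := Real.exp (lam * ε) *
    ((2 / B + 1 / n) * (Real.exp (lam * (1 - ε)) - 1) + 1) with hMval
  set bad : ZMod n × ZMod n → Prop := fun p =>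
    -(((n / B : ℕ) : ℤ)) < rep n (offset n B p.1 p.2 f f')
      ∧ rep n (offset n B p.1 p.2 f f') < ((n / B : ℕ) : ℤ) with hbad
  -- cardinalities
  have hodds : (Finset.univ.filter fun σ : ZMod n => Odd σ.val).card = n / 2 := by
    have h1 := odd_filter_card n hn2 (fun _ => True)
    simp only [and_true, Finset.filter_true] at h1
    rw [h1, Finset.card_range]
  have hNcard : S.card = (n / 2) * n := by
    rw [hS]
    show ((Finset.univ.filter fun σ : ZMod n => Odd σ.val) ×ˢ
      (Finset.univ : Finset (ZMod n))).card = _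
    rw [Finset.card_product, hodds, Finset.card_univ, ZMod.card]
  have hNR : ((S.card : ℕ) : ℝ) = (n:ℝ)^2 / 2 := by
    rw [hNcard]
    push_cast [Nat.cast_div hn2 (by norm_num : (2:ℝ) ≠ 0)]
    ring
  have hNpos : 0 < S.card := by
    rw [hNcard]
    have : 1 ≤ n / 2 := by omega
    nlinarith
  -- bad count
  have hbadN : (S.filter bad).card ≤ n * (n / B) := by
    rcases Nat.eq_zero_or_pos c with rfl | hc1
    · have hB1 : B = 1 := by rw [hB, pow_zero]
      have h1 : (S.filter bad).card ≤ S.card := Finset.card_filter_le _ _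
      rw [hNcard] at h1
      calc (S.filter bad).card ≤ (n/2) * n := h1
        _ ≤ n * (n / B) := by
            rw [hB1, Nat.div_one]
            exact Nat.mul_le_mul_right _ (Nat.div_le_self n 2)
    · exact key_count n B a c hn hB hc1 hca f f' hff
  have hnBR : ((n / B : ℕ) : ℝ) = (n:ℝ)/(B:ℝ) := by
    rw [Nat.cast_div hBdvd (by positivity)]
  have hbadR : ((S.filter bad).card : ℝ) ≤ (S.card:ℝ) * (2/(B:ℝ) + 1/(n:ℝ)) := by
    have h1 : ((S.filter bad).card : ℝ) ≤ (n:ℝ) * ((n/B : ℕ):ℝ) := by exact_mod_cast hbadN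
    rw [hnBR] at h1
    rw [hNR]
    have h2 : (n:ℝ)^2/2 * (2/(B:ℝ) + 1/(n:ℝ)) = (n:ℝ)*((n:ℝ)/(B:ℝ)) + (n:ℝ)/2 := by
      field_simp
    rw [h2]
    have : 0 ≤ (n:ℝ)/2 := by positivity
    linarith
  -- MGF bound
  have hexp_ge : 0 ≤ Real.exp lam - Real.exp (lam*ε) := by
    have h1 : lam*ε ≤ lam := by nlinarith
    have := Real.exp_le_exp.mpr h1
    linarith
  have hM : (S.card:ℝ) * Mval
      = (S.card:ℝ) * Real.exp (lam*ε)
        + ((S.card:ℝ) * (2/(B:ℝ)+1/(n:ℝ))) * (Real.exp lam - Real.exp (lam*ε)) := by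
    have he : Real.exp (lam*ε) * Real.exp (lam*(1-ε)) = Real.exp lam := by
      rw [← Real.exp_add]
      congr 1
      ring
    rw [hMval]
    linear_combination ((S.card:ℝ) * (2/(B:ℝ)+1/(n:ℝ))) * he
  have hsum_le : ∑ p ∈ S, Real.exp (lam * G (offset n B p.1 p.2 f f')) ≤ (S.card:ℝ) * Mval := by
    calc ∑ p ∈ S, Real.exp (lam * G (offset n B p.1 p.2 f f'))
        ≤ ∑ p ∈ S, (Real.exp (lam*ε)
            + (if bad p then (Real.exp lam - Real.exp (lam*ε)) else 0)) := by
          apply Finset.sum_le_sum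
          intro p hp
          by_cases hbp : bad p
          · rw [if_pos hbp]
            have h1 : G (offset n B p.1 p.2 f f') ≤ 1 := (hG01 _).2
            have h2 : Real.exp (lam * G (offset n B p.1 p.2 f f')) ≤ Real.exp (lam * 1) :=
              Real.exp_le_exp.mpr (mul_le_mul_of_nonneg_left h1 hlam.le)
            rw [mul_one] at h2
            linarith
          · rw [if_neg hbp]
            have hXe : G (offset n B p.1 p.2 f f') ≤ ε := hGtail _ hbp
            have h2 : Real.exp (lam * G (offset n B p.1 p.2 f f')) ≤ Real.exp (lam * ε) :=
              Real.exp_le_exp.mpr (mul_le_mul_of_nonneg_left hXe hlam.le)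
            linarith
      _ = (S.card:ℝ) * Real.exp (lam*ε)
            + ((S.filter bad).card : ℝ) * (Real.exp lam - Real.exp (lam*ε)) := by
          rw [Finset.sum_add_distrib, Finset.sum_const, ← Finset.sum_filter,
            Finset.sum_const]
          push_cast
          ring
      _ ≤ (S.card:ℝ) * Real.exp (lam*ε)
            + ((S.card:ℝ) * (2/(B:ℝ)+1/(n:ℝ))) * (Real.exp lam - Real.exp (lam*ε)) := by
          have := mul_le_mul_of_nonneg_right hbadR hexp_ge
          linarith
      _ = (S.card:ℝ) * Mval := hM.symm
  -- Chernoff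
  set F := (Fintype.piFinset (fun _ : Fin k => S)).filter
      (fun t : Fin k → ZMod n × ZMod n =>
        β ≤ z + ∑ ℓ : Fin k, G (offset n B (t ℓ).1 (t ℓ).2 f f')) with hF
  have hmain : ((F.card : ℕ) : ℝ)
      ≤ Real.exp (-lam*β) * Real.exp (lam*z) * ((S.card:ℝ) * Mval)^k := by
    have step1 : ((F.card : ℕ) : ℝ)
        ≤ ∑ t ∈ Fintype.piFinset (fun _ : Fin k => S),
            Real.exp (lam * ((z + ∑ ℓ : Fin k, G (offset n B (t ℓ).1 (t ℓ).2 f f')) - β)) := by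
      have h1 : ((F.card : ℕ) : ℝ) = ∑ t ∈ F, (1:ℝ) := by
        rw [Finset.sum_const, nsmul_eq_mul, mul_one]
      rw [h1]
      calc ∑ t ∈ F, (1:ℝ)
          ≤ ∑ t ∈ F, Real.exp (lam * ((z + ∑ ℓ : Fin k, G (offset n B (t ℓ).1 (t ℓ).2 f f')) - β)) := by
            apply Finset.sum_le_sum
            intro t ht
            rw [hF, Finset.mem_filter] at ht
            have h2 : 0 ≤ lam * ((z + ∑ ℓ : Fin k, G (offset n B (t ℓ).1 (t ℓ).2 f f')) - β) := by
              have := ht.2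
              nlinarith
            have := Real.add_one_le_exp (lam * ((z + ∑ ℓ : Fin k, G (offset n B (t ℓ).1 (t ℓ).2 f f')) - β))
            linarith
        _ ≤ ∑ t ∈ Fintype.piFinset (fun _ : Fin k => S),
              Real.exp (lam * ((z + ∑ ℓ : Fin k, G (offset n B (t ℓ).1 (t ℓ).2 f f')) - β)) := by
            apply Finset.sum_le_sum_of_subset_of_nonneg (Finset.filter_subset _ _)
            intro t _ _
            exact (Real.exp_pos _).le
    have step2 : ∑ t ∈ Fintype.piFinset (fun _ : Fin k => S),
          Real.exp (lam * ((z + ∑ ℓ : Fin k, G (offset n B (t ℓ).1 (t ℓ).2 f f')) - β))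
        = Real.exp (-lam*β) * Real.exp (lam*z) *
            ∑ t ∈ Fintype.piFinset (fun _ : Fin k => S),
              ∏ ℓ : Fin k, Real.exp (lam * G (offset n B (t ℓ).1 (t ℓ).2 f f')) := by
      rw [Finset.mul_sum]
      apply Finset.sum_congr rfl
      intro t _
      have h4 : Real.exp (lam * ∑ ℓ : Fin k, G (offset n B (t ℓ).1 (t ℓ).2 f f'))
          = ∏ ℓ : Fin k, Real.exp (lam * G (offset n B (t ℓ).1 (t ℓ).2 f f')) := by
        rw [Finset.mul_sum (Finset.univ) (fun ℓ : Fin k => G (offset n B (t ℓ).1 (t ℓ).2 f f')) lam, Real.exp_sum]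
      rw [show lam * ((z + ∑ ℓ : Fin k, G (offset n B (t ℓ).1 (t ℓ).2 f f')) - β)
          = (-lam*β) + (lam*z + lam * ∑ ℓ : Fin k, G (offset n B (t ℓ).1 (t ℓ).2 f f'))
          from by ring, Real.exp_add, Real.exp_add, h4]
      ring
    have step3 : ∑ t ∈ Fintype.piFinset (fun _ : Fin k => S),
          ∏ ℓ : Fin k, Real.exp (lam * G (offset n B (t ℓ).1 (t ℓ).2 f f'))
        = (∑ p ∈ S, Real.exp (lam * G (offset n B p.1 p.2 f f'))) ^ k := by
      have h5 := Finset.prod_univ_sum (fun _ : Fin k => S)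
        (fun (_ : Fin k) (p : ZMod n × ZMod n) => Real.exp (lam * G (offset n B p.1 p.2 f f')))
      rw [← h5, Finset.prod_const, Finset.card_univ, Fintype.card_fin]
    have hsum0 : 0 ≤ ∑ p ∈ S, Real.exp (lam * G (offset n B p.1 p.2 f f')) :=
      Finset.sum_nonneg fun p _ => (Real.exp_pos _).le
    calc ((F.card : ℕ) : ℝ)
        ≤ ∑ t ∈ Fintype.piFinset (fun _ : Fin k => S),
            Real.exp (lam * ((z + ∑ ℓ : Fin k, G (offset n B (t ℓ).1 (t ℓ).2 f f')) - β)) := step1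
      _ = Real.exp (-lam*β) * Real.exp (lam*z) *
            ((∑ p ∈ S, Real.exp (lam * G (offset n B p.1 p.2 f f'))) ^ k) := by rw [step2, step3]
      _ ≤ Real.exp (-lam*β) * Real.exp (lam*z) * ((S.card:ℝ) * Mval)^k := by
          apply mul_le_mul_of_nonneg_left
          · exact pow_le_pow_left₀ hsum0 hsum_le k
          · positivity
  -- conclude
  have hNk : (0:ℝ) < ((S.card : ℕ) : ℝ)^k := by
    apply pow_pos
    exact_mod_cast hNpos
  rw [div_le_iff₀ hNk]
  calc ((F.card : ℕ) : ℝ)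
      ≤ Real.exp (-lam*β) * Real.exp (lam*z) * ((S.card:ℝ) * Mval)^k := hmain
    _ = Real.exp (-lam*β) * Real.exp (lam*z) * Mval^k * ((S.card:ℝ))^k := by
        rw [mul_pow]
        ring
end

section
/- There exist absolute constants λ₀ > 0, C₁ ≥ 1 and C₂ ≥ 1 such that the following holds. For all powers of two n and B with 2 ≤ B < n, every ε ∈ (0, 1/B], and every integer d ≥ C₂·B·log n, setting λ = λ₀, β = C₁·d/B, and M(λ) = e^{λε}·[(2/B + 1/n)·(e^{λ(1−ε)} − 1) + 1], one has n²·e^{−λβ}·(M(λ))^d < 1. -/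
/-- The initial constraint of the derandomization: there are absolute constants
`λ₀ > 0`, `C₁, C₂ ≥ 1` such that for all powers of two `2 ≤ B < n`, any `ε ∈ (0, 1/B]`
and any `d ≥ C₂ B log n`, setting `β = C₁ d/B` and
`M(λ) = e^{λε}[(2/B + 1/n)(e^{λ(1-ε)} - 1) + 1]`, one has `n² e^{-λ₀ β} M(λ₀)^d < 1`. -/
theorem initial_constraint :
    ∃ lam0 C1 C2 : ℝ, 0 < lam0 ∧ 1 ≤ C1 ∧ 1 ≤ C2 ∧
      ∀ a c n B : ℕ, n = 2 ^ a → B = 2 ^ c → 2 ≤ B → B < n →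
        ∀ ε : ℝ, 0 < ε → ε ≤ 1 / B →
          ∀ d : ℕ, C2 * B * Real.log n ≤ d →
            (n : ℝ) ^ 2 * Real.exp (-lam0 * (C1 * d / B)) *
              (Real.exp (lam0 * ε) *
                ((2 / B + 1 / n) * (Real.exp (lam0 * (1 - ε)) - 1) + 1)) ^ d < 1 := by
  refine ⟨1, 9, 2, one_pos, by norm_num, by norm_num, ?_⟩
  intro a c n B hn hB hB2 hBn ε hε hεB d hd
  have hBR : (2:ℝ) ≤ B := by exact_mod_cast hB2
  have hBpos : (0:ℝ) < B := by linarith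
  have hnB : (B:ℝ) < n := by exact_mod_cast hBn
  have hnpos : (0:ℝ) < n := by linarith
  have hn1 : (1:ℝ) < n := by linarith
  have hinv : (1:ℝ) / n ≤ 1 / B := by
    apply one_div_le_one_div_of_le hBpos (le_of_lt hnB)
  have hε2 : ε ≤ (1:ℝ)/2 := hεB.trans (by
    apply one_div_le_one_div_of_le (by norm_num) hBR)
  -- bound on M
  have hX1 : (1:ℝ) ≤ (2 / B + 1 / n) * (Real.exp (1 * (1 - ε)) - 1) + 1 := by
    have h1 : (0:ℝ) ≤ 2 / B + 1 / n := by positivity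
    have h2 : (0:ℝ) ≤ Real.exp (1 * (1 - ε)) - 1 := by
      have : (0:ℝ) ≤ 1 * (1 - ε) := by linarith
      nlinarith [Real.one_le_exp this]
    nlinarith
  have hM : Real.exp (1 * ε) * ((2 / B + 1 / n) * (Real.exp (1 * (1 - ε)) - 1) + 1)
      ≤ Real.exp (7 / B) := by
    have hX : (2 / B + 1 / n) * (Real.exp (1 * (1 - ε)) - 1) + 1 ≤ Real.exp (6 / B) := by
      have hcoef : 2 / (B:ℝ) + 1 / n ≤ 3 / B := by
        have h3 : (3:ℝ)/B = 2/B + 1/B := by ring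
        linarith
      have hcoef0 : (0:ℝ) ≤ 2 / B + 1 / n := by positivity
      have hexp : Real.exp (1 * (1 - ε)) - 1 ≤ 2 := by
        have h1 : Real.exp (1 * (1 - ε)) ≤ Real.exp 1 := by
          apply Real.exp_le_exp.mpr; linarith
        have := Real.exp_one_lt_d9
        linarith
      have hexp0 : (0:ℝ) ≤ Real.exp (1 * (1 - ε)) - 1 := by
        have : (0:ℝ) ≤ 1 * (1 - ε) := by linarith
        nlinarith [Real.one_le_exp this]
      have hstep : (2 / (B:ℝ) + 1 / n) * (Real.exp (1 * (1 - ε)) - 1) + 1 ≤ 1 + 6 / B := by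
        have h6 : (3:ℝ)/B * 2 = 6/B := by ring
        nlinarith [mul_le_mul hcoef hexp hexp0 (by positivity : (0:ℝ) ≤ 3 / (B:ℝ))]
      have := Real.add_one_le_exp (6 / B)
      linarith
    have hE : Real.exp (1 * ε) ≤ Real.exp (1 / B) := by
      apply Real.exp_le_exp.mpr; linarith
    calc Real.exp (1 * ε) * ((2 / B + 1 / n) * (Real.exp (1 * (1 - ε)) - 1) + 1)
        ≤ Real.exp (1 / B) * Real.exp (6 / B) := by
          apply mul_le_mul hE hX (by linarith) (Real.exp_pos _).le
      _ = Real.exp (7 / B) := by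
          rw [← Real.exp_add]; ring_nf
  have hMpos : (0:ℝ) < Real.exp (1 * ε) * ((2 / B + 1 / n) * (Real.exp (1 * (1 - ε)) - 1) + 1) := by
    have := hX1
    positivity
  have hMd : (Real.exp (1 * ε) * ((2 / B + 1 / n) * (Real.exp (1 * (1 - ε)) - 1) + 1)) ^ d
      ≤ Real.exp (7 * d / B) := by
    calc (Real.exp (1 * ε) * ((2 / B + 1 / n) * (Real.exp (1 * (1 - ε)) - 1) + 1)) ^ d
        ≤ (Real.exp (7 / B)) ^ d := pow_le_pow_left₀ hMpos.le hM d
      _ = Real.exp (7 * d / B) := by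
          rw [← Real.exp_nat_mul]; ring_nf
  -- final estimate
  have hlog : 0 < Real.log n := Real.log_pos hn1
  have hdlog : (B:ℝ) * Real.log n < d := by nlinarith
  have hkey : (n:ℝ) ^ 2 < Real.exp (2 * d / B) := by
    have hlog2 : Real.log ((n:ℝ) ^ 2) < 2 * d / B := by
      rw [Real.log_pow]
      push_cast
      rw [lt_div_iff₀ hBpos]
      nlinarith
    calc (n:ℝ) ^ 2 = Real.exp (Real.log ((n:ℝ) ^ 2)) := (Real.exp_log (by positivity)).symm
      _ < Real.exp (2 * d / B) := Real.exp_lt_exp.mpr hlog2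
  calc (n : ℝ) ^ 2 * Real.exp (-1 * (9 * d / B)) *
        (Real.exp (1 * ε) * ((2 / B + 1 / n) * (Real.exp (1 * (1 - ε)) - 1) + 1)) ^ d
      ≤ (n : ℝ) ^ 2 * Real.exp (-1 * (9 * d / B)) * Real.exp (7 * d / B) := by
        apply mul_le_mul_of_nonneg_left hMd (by positivity)
    _ = (n : ℝ) ^ 2 * Real.exp (-(2 * d / B)) := by
        rw [mul_assoc, ← Real.exp_add]; ring_nf
    _ < Real.exp (2 * d / B) * Real.exp (-(2 * d / B)) := by
        apply mul_lt_mul_of_pos_right hkey (Real.exp_pos _)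
    _ = 1 := by rw [← Real.exp_add]; simp
end

section
/- Let k ≥ 1 be an integer, β > 0 and ν > 0 real numbers, and let ŵ, v ∈ ℂ^n be vectors such that |v_f − ŵ_f| ≤ ‖ŵ‖₁/(βk) for every f ∈ [n], and suppose ν ≥ (16/(βk))·‖ŵ‖₁. Define ŵ' ∈ ℂ^n by ŵ'_f = v_f if |v_f| > ν/2 and ŵ'_f = 0 otherwise. Then: (i) |ŵ_f| ≥ (7/16)·ν for every f in the support of ŵ'; (ii) |ŵ_f − ŵ'_f| ≤ |ŵ_f|/7 for every f in the support of ŵ'; (iii) the support of ŵ' contains every f with |ŵ_f| ≥ ν. -/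
open Finset

/-- Guarantee of the SubRecovery subroutine: if every per-frequency estimate `v_f` is within
`‖ŵ‖₁/(βk)` of `ŵ_f` and the threshold satisfies `ν ≥ (16/(βk))‖ŵ‖₁`, then the thresholded
vector `ŵ'` (keeping `v_f` when `|v_f| > ν/2`) satisfies: (i) `|ŵ_f| ≥ (7/16)ν` on its
support; (ii) `|ŵ_f - ŵ'_f| ≤ |ŵ_f|/7` on its support; (iii) its support contains every `f`
with `|ŵ_f| ≥ ν`. -/
theorem subRecovery_guarantee (n k : ℕ) (hk : 1 ≤ k) (β ν : ℝ) (hβ : 0 < β) (hν : 0 < ν)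
    (w v : Fin n → ℂ)
    (hest : ∀ f : Fin n,
      ‖v f - w f‖ ≤ (∑ g : Fin n, ‖w g‖) / (β * k))
    (hthresh : 16 / (β * k) * (∑ g : Fin n, ‖w g‖) ≤ ν) :
    ∀ w' : Fin n → ℂ,
      (∀ f : Fin n, w' f = if ν / 2 < ‖v f‖ then v f else 0) →
      (∀ f : Fin n, w' f ≠ 0 → 7 / 16 * ν ≤ ‖w f‖) ∧
      (∀ f : Fin n, w' f ≠ 0 → ‖w f - w' f‖ ≤ ‖w f‖ / 7) ∧
      (∀ f : Fin n, ν ≤ ‖w f‖ → w' f ≠ 0) := by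
  intro w' hw'
  set S := ∑ g : Fin n, ‖w g‖ with hS
  have hβk : (0:ℝ) < β * k := by positivity
  have he : S / (β * k) ≤ ν / 16 := by
    rw [div_le_iff₀ hβk, div_mul_eq_mul_div, div_le_iff₀ hβk] at *
    linarith
  have key : ∀ f : Fin n, w' f ≠ 0 → 7 / 16 * ν ≤ ‖w f‖ := by
    intro f hf
    rw [hw' f] at hf
    by_cases h : ν / 2 < ‖v f‖
    · have h1 := hest f
      have h2 : ‖v f‖ ≤ ‖v f - w f‖ + ‖w f‖ := by
        simpa using norm_add_le (v f - w f) (w f)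
      linarith
    · simp [h] at hf
  refine ⟨key, ?_, ?_⟩
  · intro f hf
    have h1 := key f hf
    rw [hw' f] at hf ⊢
    by_cases h : ν / 2 < ‖v f‖
    · simp only [if_pos h]
      have h2 := hest f
      have : ‖w f - v f‖ = ‖v f - w f‖ := by
        rw [norm_sub_rev]
      linarith [he, h1, h2, this ▸ h2]
    · simp [h] at hf
  · intro f hf
    rw [hw' f]
    have h1 := hest f
    have h2 : ‖w f‖ ≤ ‖v f - w f‖ + ‖v f‖ := by
      have := norm_add_le (w f - v f) (v f)
      rw [sub_add_cancel, norm_sub_rev] at this; exact this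
    have h3 : ν / 2 < ‖v f‖ := by linarith
    rw [if_pos h3]
    intro h0
    rw [h0] at h3
    simp at h3
    linarith
end
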